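/- arXiv:2602.16465 — 4 statements merged into one kernel-verified Lean document; each statement's English description precedes it below -/
import Mathlib

section
/- Let x ∈ {0,1}^n satisfy Σ_{i=1}^n x_i ≤ p and either Σ_{i=1}^m a'_i x_i > 1 or x_i = 1 for some i ∈ {m+1,…,n}. Then inf_{π≥0} h_x(π) > (Γ + 1)M + V. -/
set_option maxHeartbeats 1000000


open Classical
noncomputable section

/-- A knapsack instance `a, v ∈ ℕ^m`, `b ∈ ℕ` with `1 ≤ a_i ≤ b - 1`, `1 ≤ v_i`,
and `b` dividing `∑ a_i` (items indexed by `1, …, m`). -/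
structure KnapInstance where
  m : ℕ
  b : ℕ
  a : ℕ → ℕ
  v : ℕ → ℕ
  hm : 1 ≤ m
  ha : ∀ i ∈ Finset.Icc 1 m, 1 ≤ a i ∧ a i ≤ b - 1
  hv : ∀ i ∈ Finset.Icc 1 m, 1 ≤ v i
  hb : b ∣ ∑ i ∈ Finset.Icc 1 m, a i

namespace KnapInstance

variable (K : KnapInstance)

/-- `A' = (∑ a_i)/b` (an integer). -/
def A' : ℕ := (∑ i ∈ Finset.Icc 1 K.m, K.a i) / K.b

/-- Number of items of the constructed instance: `n = 2m - A' + 3`. -/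
def nn : ℕ := 2 * K.m - K.A' + 3

/-- Number of items to select: `p = 2m - 2A' + 3`. -/
def pp : ℕ := 2 * K.m - 2 * K.A' + 3

/-- Uncertainty budget: `Γ = m - A' + 1`. -/
def Gam : ℝ := (K.m : ℝ) - (K.A' : ℝ) + 1

/-- `V = ∑ v_i`. -/
def V : ℕ := ∑ i ∈ Finset.Icc 1 K.m, K.v i

/-- The large constant `M = 3mbV`. -/
def M : ℝ := 3 * (K.m : ℝ) * (K.b : ℝ) * (K.V : ℝ)

/-- Scaled sizes `a'_i = a_i / b`. -/
def a' (i : ℕ) : ℝ := (K.a i : ℝ) / (K.b : ℝ)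

/-- First-stage costs of the constructed instance. -/
def C (i : ℕ) : ℝ := if i ≤ K.m then K.M * K.a' i else ((K.m : ℝ) + 3) * K.M

/-- Lower second-stage costs `c̲` of the constructed instance. -/
def cl (i : ℕ) : ℝ :=
  if i ≤ K.m then (K.v i : ℝ) / (1 - K.a' i) else if i = K.m + 1 then K.M else 0

/-- Deviations `d` of the constructed instance. -/
def d (i : ℕ) : ℝ := if i ≤ K.m then K.M / (1 - K.a' i) else K.M

/-- `g(x, π)`: the optimal value of
`min ∑_{i∈R_x} c̲_i y_i + ∑_{i∈R_x} ρ_i` s.t. `∑_{i∈R_x} y_i = p_x`,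
`π + ρ_i ≥ d_i y_i` for `i ∈ R_x`, `y ∈ [0,1]^{R_x}`, `ρ ≥ 0`, where
`R_x = {i ∈ [n] : x_i = 0}` and `p_x = p - ∑_i x_i`. -/
def g (x : ℕ → ℝ) (π : ℝ) : ℝ :=
  sInf {val | ∃ y ρ : ℕ → ℝ,
    (∀ i ∈ Finset.Icc 1 K.nn, x i = 0 →
      (0 ≤ y i ∧ y i ≤ 1 ∧ 0 ≤ ρ i ∧ K.d i * y i ≤ π + ρ i)) ∧
    (∑ i ∈ (Finset.Icc 1 K.nn).filter (fun i => x i = 0), y i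
      = (K.pp : ℝ) - ∑ i ∈ Finset.Icc 1 K.nn, x i) ∧
    val = ∑ i ∈ (Finset.Icc 1 K.nn).filter (fun i => x i = 0), (K.cl i * y i + ρ i)}

/-- `h_x(π) = ∑ C_i x_i + Γπ + g(x, π)`. -/
def h (x : ℕ → ℝ) (π : ℝ) : ℝ :=
  (∑ i ∈ Finset.Icc 1 K.nn, K.C i * x i) + K.Gam * π + K.g x π

end KnapInstance


section Helpers
open Finset
variable (K : KnapInstance)

lemma hb2 : 2 ≤ K.b := by
  have h := K.ha 1 (by simp [Finset.mem_Icc, K.hm])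
  omega

lemma hV1 : 1 ≤ K.V := by
  have h1 : (1:ℕ) ∈ Finset.Icc 1 K.m := by simp [Finset.mem_Icc, K.hm]
  have h2 : 1 ≤ K.v 1 := K.hv 1 h1
  have h3 : K.v 1 ≤ K.V := Finset.single_le_sum (f := fun i => K.v i) (fun i _ => Nat.zero_le _) h1
  omega

lemma hMpos : (0:ℝ) < K.M := by
  unfold KnapInstance.M
  have h1 : (1:ℝ) ≤ (K.m : ℝ) := by exact_mod_cast K.hm
  have h2 : (2:ℝ) ≤ (K.b : ℝ) := by exact_mod_cast hb2 K
  have h3 : (1:ℝ) ≤ (K.V : ℝ) := by exact_mod_cast hV1 K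
  have := mul_pos (mul_pos (mul_pos (by norm_num : (0:ℝ) < 3)
    (by linarith : (0:ℝ) < (K.m:ℝ))) (by linarith : (0:ℝ) < (K.b:ℝ)))
    (by linarith : (0:ℝ) < (K.V:ℝ))
  linarith

lemma hsum_a_pos : K.b ≤ ∑ i ∈ Finset.Icc 1 K.m, K.a i := by
  apply Nat.le_of_dvd _ K.hb
  have h1 : (1:ℕ) ∈ Finset.Icc 1 K.m := by simp [Finset.mem_Icc, K.hm]
  calc 0 < K.a 1 := (K.ha 1 h1).1
    _ ≤ _ := Finset.single_le_sum (f := fun i => K.a i) (fun i _ => Nat.zero_le _) h1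

lemma hA1 : 1 ≤ K.A' := by
  unfold KnapInstance.A'
  rw [Nat.one_le_div_iff (by have := hb2 K; omega)]
  exact hsum_a_pos K

lemma hA'm : K.A' + 1 ≤ K.m := by
  have hb0 : 0 < K.b := by have := hb2 K; omega
  have hs : ∑ i ∈ Finset.Icc 1 K.m, K.a i ≤ K.m * (K.b - 1) := by
    calc ∑ i ∈ Finset.Icc 1 K.m, K.a i ≤ ∑ i ∈ Finset.Icc 1 K.m, (K.b - 1) :=
      Finset.sum_le_sum (fun i hi => (K.ha i hi).2)
    _ = K.m * (K.b - 1) := by rw [Finset.sum_const, Nat.card_Icc, smul_eq_mul]; simp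
  have : K.A' < K.m := by
    unfold KnapInstance.A'
    rw [Nat.div_lt_iff_lt_mul hb0]
    have h1 := K.hm; have h2 := hb2 K
    have h3 : K.m * (K.b - 1) + K.m = K.m * K.b := by
      have h4 : K.b - 1 + 1 = K.b := by omega
      calc K.m * (K.b - 1) + K.m = K.m * (K.b - 1 + 1) := by ring
        _ = K.m * K.b := by rw [h4]
    omega
  omega

lemma hA'cast : (K.A' : ℝ) * K.b = ∑ i ∈ Finset.Icc 1 K.m, (K.a i : ℝ) := by
  have h : K.A' * K.b = ∑ i ∈ Finset.Icc 1 K.m, K.a i := Nat.div_mul_cancel K.hb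
  calc (K.A' : ℝ) * K.b = ((K.A' * K.b : ℕ) : ℝ) := by push_cast; ring
    _ = ((∑ i ∈ Finset.Icc 1 K.m, K.a i : ℕ) : ℝ) := by rw [h]
    _ = ∑ i ∈ Finset.Icc 1 K.m, (K.a i : ℝ) := by push_cast; rfl

lemma hbRpos : (0:ℝ) < K.b := by
  have := hb2 K
  exact_mod_cast Nat.lt_of_lt_of_le Nat.zero_lt_two this

lemma ha'bounds (i : ℕ) (hi : i ∈ Finset.Icc 1 K.m) :
    0 ≤ K.a' i ∧ K.a' i ≤ 1 - 1 / K.b := by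
  have hb0 := hbRpos K
  constructor
  · exact div_nonneg (Nat.cast_nonneg _) hb0.le
  · have h1 : (K.a i : ℝ) ≤ (K.b : ℝ) - 1 := by
      have h2 := (K.ha i hi).2
      have h3 : (K.a i : ℝ) ≤ ((K.b - 1 : ℕ) : ℝ) := by exact_mod_cast h2
      have h4 : ((K.b - 1 : ℕ) : ℝ) = (K.b : ℝ) - 1 := by
        have := hb2 K
        push_cast [Nat.cast_sub (by omega : 1 ≤ K.b)]
        ring
      linarith [h4 ▸ h3]
    unfold KnapInstance.a'
    rw [div_le_iff₀ hb0]
    have hb1 : 1 / (K.b : ℝ) * (K.b : ℝ) = 1 := by field_simp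
    nlinarith

lemma hd1a (i : ℕ) (hi : i ∈ Finset.Icc 1 K.m) : 1 / (K.b : ℝ) ≤ 1 - K.a' i := by
  have h := (ha'bounds K i hi).2
  linarith

/-- per-item deviation lower bound for knapsack items with `z ≤ a'` -/
lemma hdJ (i : ℕ) (hi : i ∈ Finset.Icc 1 K.m) (hza : z ≤ K.a' i) :
    K.M * (1 + K.a' i - z) ≤ K.d i * (1 - z) := by
  have him : i ≤ K.m := (Finset.mem_Icc.mp hi).2
  have h1a : 0 < 1 - K.a' i := by
    have := hd1a K i hi
    have := hbRpos K
    have : 0 < 1 / (K.b:ℝ) := by positivity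
    linarith [hd1a K i hi]
  have ha0 : 0 ≤ K.a' i := (ha'bounds K i hi).1
  have hM := hMpos K
  unfold KnapInstance.d
  rw [if_pos him, div_mul_eq_mul_div, le_div_iff₀ h1a]
  nlinarith [mul_nonneg (mul_nonneg hM.le ha0) (by linarith : (0:ℝ) ≤ K.a' i - z)]

lemma select (J : Finset ℕ) (hJ : J ⊆ Finset.Icc 1 K.m) (z : ℕ → ℝ)
    (hz : ∀ i ∈ J ∪ Finset.Icc (K.m+2) K.nn, 0 ≤ z i ∧ z i ≤ 1)
    (hA2 : 2 ≤ K.A')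
    (hZσ : (∑ j ∈ J, K.a' j) + 1/(K.b:ℝ) ≤ ∑ i ∈ J ∪ Finset.Icc (K.m+2) K.nn, z i) :
    ∃ T ⊆ J ∪ Finset.Icc (K.m+2) K.nn,
      T.card ≤ K.m - K.A' + 1 ∧
      K.M * (((K.m - K.A' + 1 : ℕ) : ℝ) - (∑ i ∈ J ∪ Finset.Icc (K.m+2) K.nn, z i)
          + ∑ j ∈ J, K.a' j) + 2 * (K.V : ℝ)
        ≤ ∑ i ∈ T, K.d i * (1 - z i) := by
  classical
  have hAm := hA'm K
  have hM := hMpos K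
  have hbR := hbRpos K
  have hV1R : (1:ℝ) ≤ (K.V:ℝ) := by exact_mod_cast hV1 K
  have hmR : (1:ℝ) ≤ (K.m:ℝ) := by exact_mod_cast K.hm
  set D := Finset.Icc (K.m+2) K.nn with hD
  set U := J ∪ D with hU
  set Gc := K.m - K.A' + 1 with hGc
  have hGcast : ((Gc:ℕ) : ℝ) = (K.m : ℝ) - (K.A' : ℝ) + 1 := by
    rw [hGc]; push_cast [Nat.cast_sub (by omega : K.A' ≤ K.m)]; ring
  have hDcard : D.card = Gc + 1 := by
    rw [hD, Nat.card_Icc]; unfold KnapInstance.nn; omega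
  have hDJdisj : Disjoint J D := by
    rw [Finset.disjoint_left]
    intro i hiJ hiD
    have h1 := (Finset.mem_Icc.mp (hJ hiJ)).2
    have h2 := (Finset.mem_Icc.mp hiD).1
    omega
  have hdDval : ∀ i ∈ D, K.d i = K.M := by
    intro i hi
    have h2 := (Finset.mem_Icc.mp hi).1
    unfold KnapInstance.d
    rw [if_neg (by omega)]
  set σ := ∑ j ∈ J, K.a' j with hσdef
  set Zr := ∑ i ∈ U, z i with hZrdef
  set Jp := J.filter (fun j => z j ≤ K.a' j) with hJp
  set Jn := J.filter (fun j => ¬ z j ≤ K.a' j) with hJn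
  have hperJ : ∀ j ∈ Jp, K.M * (1 + K.a' j - z j) ≤ K.d j * (1 - z j) := by
    intro j hj
    have hjJ := Finset.mem_filter.mp hj
    exact hdJ K j (hJ hjJ.1) hjJ.2
  by_cases hcase : Gc ≤ Jp.card
  · -- case A : T ⊆ Jp of size Gc
    obtain ⟨T, hTsub, hTcard⟩ := Finset.exists_subset_card_eq hcase
    have hTU : T ⊆ U := hTsub.trans ((Finset.filter_subset _ _).trans Finset.subset_union_left)
    refine ⟨T, hTU, by rw [hTcard], ?_⟩
    have h1 : ∀ i ∈ T, K.M ≤ K.d i * (1 - z i) := by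
      intro i hi
      have hji := hTsub hi
      have haz : z i ≤ K.a' i := (Finset.mem_filter.mp hji).2
      have := hperJ i hji
      nlinarith
    have h2 : (T.card : ℕ) • K.M ≤ ∑ i ∈ T, K.d i * (1 - z i) :=
      Finset.card_nsmul_le_sum T _ _ h1
    rw [hTcard, nsmul_eq_mul] at h2
    -- arithmetic: M*(Gc - Zr + σ) + 2V ≤ Gc*M  ⟸  2V ≤ M*(Zr - σ),  Zr - σ ≥ 1/b
    have h3 : K.M * (1/(K.b:ℝ)) ≤ K.M * (Zr - σ) := by
      apply mul_le_mul_of_nonneg_left _ hM.le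
      linarith [hZσ]
    have h4 : K.M * (1/(K.b:ℝ)) = 3 * (K.m:ℝ) * (K.V:ℝ) := by
      unfold KnapInstance.M; field_simp
    have h5 : 2 * (K.V:ℝ) ≤ 3 * (K.m:ℝ) * (K.V:ℝ) := by nlinarith
    have expand : K.M * (((Gc:ℕ):ℝ) - Zr + σ) = ((Gc:ℕ):ℝ) * K.M - K.M * (Zr - σ) := by ring
    linarith
  · -- case B
    push_neg at hcase
    have hDne : D.Nonempty := Finset.card_pos.mp (by omega)
    obtain ⟨dstar, hdstarD, hdmax⟩ := Finset.exists_max_image D z hDne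
    have herase : Gc - Jp.card ≤ (D.erase dstar).card := by
      rw [Finset.card_erase_of_mem hdstarD, hDcard]; omega
    obtain ⟨S, hSsub, hScard⟩ := Finset.exists_subset_card_eq herase
    have hSD : S ⊆ D := hSsub.trans (Finset.erase_subset _ _)
    have hdisjT : Disjoint Jp S := by
      rw [Finset.disjoint_left]
      intro i hiJp hiS
      have h1 := (Finset.mem_Icc.mp (hJ (Finset.filter_subset _ _ hiJp))).2
      have h2 := (Finset.mem_Icc.mp (hSD hiS)).1
      omega
    refine ⟨Jp ∪ S, Finset.union_subset
        ((Finset.filter_subset _ _).trans Finset.subset_union_left)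
        (hSD.trans Finset.subset_union_right), ?_, ?_⟩
    · rw [Finset.card_union_of_disjoint hdisjT, hScard]; omega
    rw [Finset.sum_union hdisjT]
    -- lower bounds on the two sums
    have e1 : ∑ i ∈ Jp, K.M * (1 + K.a' i - z i) ≤ ∑ i ∈ Jp, K.d i * (1 - z i) :=
      Finset.sum_le_sum hperJ
    have e1' : ∑ i ∈ Jp, K.M * (1 + K.a' i - z i)
        = K.M * ((Jp.card : ℝ) + (∑ i ∈ Jp, K.a' i) - ∑ i ∈ Jp, z i) := by
      rw [← Finset.mul_sum]
      congr 1
      rw [Finset.sum_sub_distrib, Finset.sum_add_distrib, Finset.sum_const, nsmul_eq_mul, mul_one]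
    have e2 : ∑ i ∈ S, K.d i * (1 - z i) = K.M * ((S.card : ℝ) - ∑ i ∈ S, z i) := by
      have : ∑ i ∈ S, K.d i * (1 - z i) = ∑ i ∈ S, K.M * (1 - z i) :=
        Finset.sum_congr rfl (fun i hi => by rw [hdDval i (hSD hi)])
      rw [this, ← Finset.mul_sum]
      congr 1
      rw [Finset.sum_sub_distrib, Finset.sum_const, nsmul_eq_mul, mul_one]
    have hsplitJa : ∑ j ∈ Jp, K.a' j + ∑ j ∈ Jn, K.a' j = σ := by
      rw [hσdef, hJp, hJn]; exact Finset.sum_filter_add_sum_filter_not J _ _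
    have hsplitJz : ∑ j ∈ Jp, z j + ∑ j ∈ Jn, z j = ∑ j ∈ J, z j := by
      rw [hJp, hJn]; exact Finset.sum_filter_add_sum_filter_not J _ _
    have hsplitU : Zr = ∑ j ∈ J, z j + ∑ i ∈ D, z i := by
      rw [hZrdef, hU]; exact Finset.sum_union hDJdisj
    have hsplitD : ∑ i ∈ D \ S, z i + ∑ i ∈ S, z i = ∑ i ∈ D, z i := Finset.sum_sdiff hSD
    have hcardsn : Jp.card + S.card = Gc := by omega
    have hcards : (Jp.card : ℝ) + (S.card : ℝ) = ((Gc:ℕ) : ℝ) := by exact_mod_cast hcardsn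
    have hzn : ∑ j ∈ Jn, K.a' j ≤ ∑ j ∈ Jn, z j :=
      Finset.sum_le_sum (fun j hj => le_of_lt (not_le.mp (Finset.mem_filter.mp hj).2))
    have hzp : ∑ j ∈ Jp, z j ≤ ∑ j ∈ Jp, K.a' j :=
      Finset.sum_le_sum (fun j hj => (Finset.mem_filter.mp hj).2)
    have hdstarS : dstar ∉ S := fun h => (Finset.mem_erase.mp (hSsub h)).1 rfl
    have hzDS : z dstar ≤ ∑ i ∈ D \ S, z i := by
      apply Finset.single_le_sum
        (f := z)
        (fun i hi => (hz i (Finset.subset_union_right (Finset.sdiff_subset hi))).1)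
      exact Finset.mem_sdiff.mpr ⟨hdstarD, hdstarS⟩
    have hzdstar0 : 0 ≤ z dstar := (hz dstar (Finset.subset_union_right hdstarD)).1
    have hzDmax : ∑ i ∈ D, z i ≤ (((Gc:ℕ):ℝ) + 1) * z dstar := by
      have h := Finset.sum_le_card_nsmul D z (z dstar) (fun i hi => hdmax i hi)
      rw [hDcard, nsmul_eq_mul, Nat.cast_add, Nat.cast_one] at h
      exact h
    have hW0 : 0 ≤ ∑ j ∈ Jn, z j - ∑ j ∈ Jn, K.a' j + ∑ i ∈ D \ S, z i := by
      linarith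
    have hGc0 : (0:ℝ) ≤ ((Gc:ℕ):ℝ) := Nat.cast_nonneg _
    have hWlb : 1/(K.b:ℝ) ≤ (((Gc:ℕ):ℝ) + 1) *
        (∑ j ∈ Jn, z j - ∑ j ∈ Jn, K.a' j + ∑ i ∈ D \ S, z i) := by
      have hint1 := mul_le_mul_of_nonneg_left hzDS hGc0
      have hint2 := mul_nonneg hGc0 (by linarith : (0:ℝ) ≤ ∑ j ∈ Jn, z j - ∑ j ∈ Jn, K.a' j)
      linarith [hint1, hint2, hzDmax, hzDS, hZσ, hsplitJa, hsplitJz, hsplitU, hsplitD, hzp]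
    have hA2R : (2:ℝ) ≤ (K.A':ℝ) := by exact_mod_cast hA2
    have hM2V : 2*(K.V:ℝ)*((K.b:ℝ)*(((Gc:ℕ):ℝ)+1)) ≤ K.M := by
      rw [hGcast]
      unfold KnapInstance.M
      nlinarith [mul_nonneg (mul_nonneg (by linarith : (0:ℝ) ≤ (K.V:ℝ)) hbR.le)
        (by linarith : (0:ℝ) ≤ (K.m:ℝ) + 2*(K.A':ℝ) - 4)]
    have h2V : 2*(K.V:ℝ) ≤ K.M *
        (∑ j ∈ Jn, z j - ∑ j ∈ Jn, K.a' j + ∑ i ∈ D \ S, z i) := by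
      have h1 : 1 ≤ (K.b:ℝ) * ((((Gc:ℕ):ℝ)+1) *
          (∑ j ∈ Jn, z j - ∑ j ∈ Jn, K.a' j + ∑ i ∈ D \ S, z i)) := by
        have h := mul_le_mul_of_nonneg_left hWlb hbR.le
        rwa [mul_one_div, div_self (ne_of_gt hbR)] at h
      linarith [mul_le_mul_of_nonneg_right hM2V hW0,
        mul_le_mul_of_nonneg_left h1 (by positivity : (0:ℝ) ≤ 2*(K.V:ℝ))]
    have final_eq : K.M * ((Jp.card:ℝ) + ∑ i ∈ Jp, K.a' i - ∑ i ∈ Jp, z i)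
        + K.M * ((S.card:ℝ) - ∑ i ∈ S, z i)
        = K.M * (((Gc:ℕ):ℝ) - Zr + σ)
          + K.M * (∑ j ∈ Jn, z j - ∑ j ∈ Jn, K.a' j + ∑ i ∈ D \ S, z i) := by
      linear_combination K.M*hcards + K.M*hsplitU + K.M*hsplitJa - K.M*hsplitJz - K.M*hsplitD
    linarith [e1, e2, h2V, final_eq, e1']
end Helpers

section MoreHelpers
open Finset
variable (K : KnapInstance)

lemma hIccsub (i : ℕ) (hi : i ∈ Finset.Icc 1 K.nn) (him : i ≤ K.m) :
    i ∈ Finset.Icc 1 K.m := by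
  simp only [Finset.mem_Icc] at hi ⊢
  exact ⟨hi.1, him⟩

lemma hcl0 (i : ℕ) (hi : i ∈ Finset.Icc 1 K.nn) : 0 ≤ K.cl i := by
  unfold KnapInstance.cl
  by_cases him : i ≤ K.m
  · rw [if_pos him]
    have h1 := hd1a K i (hIccsub K i hi him)
    have h3 : (0:ℝ) < 1 / (K.b:ℝ) := one_div_pos.mpr (hbRpos K)
    exact div_nonneg (Nat.cast_nonneg _) (by linarith)
  · rw [if_neg him]
    by_cases h : i = K.m + 1
    · rw [if_pos h]; exact (hMpos K).le
    · rw [if_neg h]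

lemma hd0 (i : ℕ) (hi : i ∈ Finset.Icc 1 K.nn) : 0 ≤ K.d i := by
  unfold KnapInstance.d
  by_cases him : i ≤ K.m
  · rw [if_pos him]
    have h1 := hd1a K i (hIccsub K i hi him)
    have h3 : (0:ℝ) < 1 / (K.b:ℝ) := one_div_pos.mpr (hbRpos K)
    exact div_nonneg (hMpos K).le (by linarith)
  · rw [if_neg him]; exact (hMpos K).le

lemma hC0 (i : ℕ) (hi : i ∈ Finset.Icc 1 K.nn) : 0 ≤ K.C i := by
  unfold KnapInstance.C
  by_cases him : i ≤ K.m
  · rw [if_pos him]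
    exact mul_nonneg (hMpos K).le (ha'bounds K i (hIccsub K i hi him)).1
  · rw [if_neg him]
    have := hMpos K
    have h1 : (1:ℝ) ≤ (K.m:ℝ) := by exact_mod_cast K.hm
    nlinarith

lemma hGamcast : K.Gam = ((K.m - K.A' + 1 : ℕ) : ℝ) := by
  have := hA'm K
  unfold KnapInstance.Gam
  push_cast [Nat.cast_sub (by omega : K.A' ≤ K.m)]
  ring

lemma hGamnn : 0 ≤ K.Gam := by
  rw [hGamcast]; exact Nat.cast_nonneg _

lemma ha'sum : ∑ i ∈ Finset.Icc 1 K.m, K.a' i = (K.A' : ℝ) := by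
  unfold KnapInstance.a'
  rw [← Finset.sum_div]
  rw [← hA'cast K]
  rw [mul_div_assoc, div_self (ne_of_gt (hbRpos K)), mul_one]

end MoreHelpers

/-- If `x` is feasible for the constructed instance but does not encode a feasible knapsack
solution (i.e., `∑ a'_i x_i > 1` or `x_i = 1` for some `i ∈ {m+1, …, n}`), then
`inf_{π ≥ 0} h_x(π) > (Γ + 1)M + V`. -/
theorem stmt10 (K : KnapInstance) (x : ℕ → ℝ)
    (hbin : ∀ i ∈ Finset.Icc 1 K.nn, x i = 0 ∨ x i = 1)
    (hsum : ∑ i ∈ Finset.Icc 1 K.nn, x i ≤ (K.pp : ℝ))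
    (hbad : 1 < ∑ i ∈ Finset.Icc 1 K.m, K.a' i * x i ∨
      ∃ i ∈ Finset.Icc (K.m + 1) K.nn, x i = 1) :
    (K.Gam + 1) * K.M + (K.V : ℝ) < sInf {w | ∃ π : ℝ, 0 ≤ π ∧ w = K.h x π} := by
  classical
  have hM := hMpos K
  have hbR := hbRpos K
  have hV1R : (1:ℝ) ≤ (K.V:ℝ) := by exact_mod_cast hV1 K
  have hmR : (1:ℝ) ≤ (K.m:ℝ) := by exact_mod_cast K.hm
  have hAm := hA'm K
  have hA1' := hA1 K
  have hA1R : (1:ℝ) ≤ (K.A':ℝ) := by exact_mod_cast hA1'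
  have hAmR : (K.A':ℝ) + 1 ≤ (K.m:ℝ) := by exact_mod_cast hAm
  have hnnm : K.m + 1 ≤ K.nn := by unfold KnapInstance.nn; omega
  have hnp : K.pp + K.A' = K.nn := by unfold KnapInstance.pp KnapInstance.nn; omega
  have hnpR : (K.pp:ℝ) + (K.A':ℝ) = (K.nn:ℝ) := by exact_mod_cast hnp
  have hx0 : ∀ i ∈ Finset.Icc 1 K.nn, 0 ≤ x i := by
    intro i hi
    rcases hbin i hi with h | h <;> rw [h] <;> norm_num
  -- cardinality of R
  have hcardsum : ((((Finset.Icc 1 K.nn).filter (fun i => x i = 0)).card : ℝ))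
      + ∑ i ∈ Finset.Icc 1 K.nn, x i = (K.nn:ℝ) := by
    have h1 : ∑ i ∈ Finset.Icc 1 K.nn, x i
        = ∑ i ∈ (Finset.Icc 1 K.nn).filter (fun i => x i = 0), x i
          + ∑ i ∈ (Finset.Icc 1 K.nn).filter (fun i => ¬ x i = 0), x i :=
      (Finset.sum_filter_add_sum_filter_not _ _ _).symm
    have h2 : ∑ i ∈ (Finset.Icc 1 K.nn).filter (fun i => x i = 0), x i = 0 :=
      Finset.sum_eq_zero (fun i hi => (Finset.mem_filter.mp hi).2)
    have h3 : ∑ i ∈ (Finset.Icc 1 K.nn).filter (fun i => ¬ x i = 0), x i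
        = (((Finset.Icc 1 K.nn).filter (fun i => ¬ x i = 0)).card : ℝ) := by
      rw [Finset.sum_congr rfl (fun i hi => ?_), Finset.sum_const, nsmul_eq_mul, mul_one]
      have hmem := Finset.mem_filter.mp hi
      exact (hbin i hmem.1).resolve_left hmem.2
    have h4 := Finset.card_filter_add_card_filter_not
      (s := Finset.Icc 1 K.nn) (p := fun i => x i = 0)
    have h5 : (Finset.Icc 1 K.nn).card = K.nn := by rw [Nat.card_Icc]; omega
    rw [h1, h2, h3, zero_add, ← Nat.cast_add]
    rw [h5] at h4
    exact_mod_cast congrArg (Nat.cast : ℕ → ℝ) h4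
  refine lt_of_lt_of_le (show (K.Gam + 1) * K.M + (K.V:ℝ)
      < (K.Gam + 1) * K.M + 2*(K.V:ℝ) by linarith)
    (le_csInf ⟨K.h x 0, 0, le_rfl, rfl⟩ ?_)
  rintro w ⟨π, hπ, rfl⟩
  unfold KnapInstance.h
  by_cases hc2 : ∃ i ∈ Finset.Icc (K.m + 1) K.nn, x i = 1
  · -- case 2: a dummy item is selected
    obtain ⟨i₀, hi₀, hxi₀⟩ := hc2
    have hi₀F : i₀ ∈ Finset.Icc 1 K.nn := by
      simp only [Finset.mem_Icc] at hi₀ ⊢; omega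
    have hg0 : 0 ≤ K.g x π := by
      apply Real.sInf_nonneg
      rintro val ⟨y, ρ, hfeas, hysum, rfl⟩
      apply Finset.sum_nonneg
      intro i hi
      have hmem := Finset.mem_filter.mp hi
      obtain ⟨hy0, hy1, hρ0, hcon⟩ := hfeas i hmem.1 hmem.2
      have := hcl0 K i hmem.1
      positivity
    have hCx : ((K.m:ℝ) + 3) * K.M ≤ ∑ i ∈ Finset.Icc 1 K.nn, K.C i * x i := by
      have h1 : K.C i₀ * x i₀ = ((K.m:ℝ) + 3) * K.M := by
        unfold KnapInstance.C
        have : ¬ i₀ ≤ K.m := by simp only [Finset.mem_Icc] at hi₀; omega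
        rw [if_neg this, hxi₀, mul_one]
      rw [← h1]
      exact Finset.single_le_sum
        (fun i hi => mul_nonneg (hC0 K i hi) (hx0 i hi)) hi₀F
    have hGπ : 0 ≤ K.Gam * π := mul_nonneg (hGamnn K) hπ
    have harith : (K.Gam + 1) * K.M + 2*(K.V:ℝ) ≤ ((K.m:ℝ) + 3) * K.M := by
      unfold KnapInstance.Gam
      have hb2R : (2:ℝ) ≤ (K.b:ℝ) := by exact_mod_cast hb2 K
      have hMV : (K.V:ℝ) ≤ K.M := by
        unfold KnapInstance.M
        nlinarith [mul_le_mul_of_nonneg_right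
          (mul_le_mul hmR hb2R (by norm_num) (by linarith) : (1:ℝ)*2 ≤ (K.m:ℝ)*(K.b:ℝ))
          (by linarith : (0:ℝ) ≤ (K.V:ℝ))]
      nlinarith
    linarith
  · -- case 1
    have hcase1 : ∀ i ∈ Finset.Icc (K.m + 1) K.nn, x i = 0 := by
      intro i hi
      have hiF : i ∈ Finset.Icc 1 K.nn := by
        simp only [Finset.mem_Icc] at hi ⊢; omega
      exact (hbin i hiF).resolve_right (fun h => hc2 ⟨i, hi, h⟩)
    have hs := hbad.resolve_right hc2
    set J := (Finset.Icc 1 K.m).filter (fun i => x i = 0) with hJdef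
    set sel := (Finset.Icc 1 K.m).filter (fun i => ¬ x i = 0) with hseldef
    have hICCmF : Finset.Icc 1 K.m ⊆ Finset.Icc 1 K.nn := by
      intro i hi; simp only [Finset.mem_Icc] at hi ⊢; omega
    have hsel1 : ∀ i ∈ sel, x i = 1 := by
      intro i hi
      have hmem := Finset.mem_filter.mp hi
      exact (hbin i (hICCmF hmem.1)).resolve_left hmem.2
    have hs_eq : ∑ i ∈ Finset.Icc 1 K.m, K.a' i * x i = ∑ i ∈ sel, K.a' i := by
      rw [← Finset.sum_filter_add_sum_filter_not (Finset.Icc 1 K.m) (fun i => x i = 0)]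
      rw [Finset.sum_eq_zero (fun i hi => by
        rw [(Finset.mem_filter.mp hi).2, mul_zero] : ∀ i ∈ J, K.a' i * x i = 0), zero_add]
      exact Finset.sum_congr rfl (fun i hi => by rw [hsel1 i hi, mul_one])
    have hsσ : ∑ i ∈ sel, K.a' i + ∑ j ∈ J, K.a' j = (K.A':ℝ) := by
      rw [← ha'sum K]
      rw [← Finset.sum_filter_add_sum_filter_not (Finset.Icc 1 K.m) (fun i => x i = 0) K.a']
      ring
    have hσ0 : 0 ≤ ∑ j ∈ J, K.a' j :=
      Finset.sum_nonneg (fun j hj => (ha'bounds K j (Finset.filter_subset _ _ hj)).1)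
    have hsel_lb : 1 + 1/(K.b:ℝ) ≤ ∑ i ∈ sel, K.a' i := by
      have hN : ∑ i ∈ sel, K.a' i = ((∑ i ∈ sel, K.a i : ℕ):ℝ) / K.b := by
        unfold KnapInstance.a'; rw [← Finset.sum_div]; push_cast; rfl
      rw [hs_eq] at hs
      rw [hN] at hs ⊢
      have h1 : (K.b:ℝ) < ((∑ i ∈ sel, K.a i : ℕ):ℝ) := by
        rwa [lt_div_iff₀ hbR, one_mul] at hs
      have h2 : K.b + 1 ≤ ∑ i ∈ sel, K.a i := by
        have : K.b < ∑ i ∈ sel, K.a i := by exact_mod_cast h1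
        omega
      have h3 : ((K.b:ℝ) + 1) ≤ ((∑ i ∈ sel, K.a i : ℕ):ℝ) := by exact_mod_cast h2
      calc 1 + 1/(K.b:ℝ) = ((K.b:ℝ) + 1)/K.b := by field_simp
        _ ≤ ((∑ i ∈ sel, K.a i : ℕ):ℝ) / K.b := by gcongr
    have hA2 : 2 ≤ K.A' := by
      have hb0 : 0 < 1/(K.b:ℝ) := one_div_pos.mpr hbR
      have h1 : (1:ℝ) < (K.A':ℝ) := by linarith
      have : 1 < K.A' := by exact_mod_cast h1
      omega
    have hRcard : ((((Finset.Icc 1 K.nn).filter (fun i => x i = 0)).card:ℝ))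
        = (K.nn:ℝ) - ∑ i ∈ Finset.Icc 1 K.nn, x i := by linarith
    have hRpos : (0:ℝ) < ((((Finset.Icc 1 K.nn).filter (fun i => x i = 0)).card:ℝ)) := by
      rw [hRcard]; linarith
    have hgoal : (K.Gam+1)*K.M + 2*(K.V:ℝ) - (∑ i ∈ Finset.Icc 1 K.nn, K.C i * x i)
        - K.Gam * π ≤ K.g x π := by
      unfold KnapInstance.g
      apply le_csInf
      · -- nonempty
        refine ⟨_, fun _ => ((K.pp:ℝ) - ∑ i ∈ Finset.Icc 1 K.nn, x i)
            / ((((Finset.Icc 1 K.nn).filter (fun i => x i = 0)).card:ℝ)),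
          fun i => K.d i * (((K.pp:ℝ) - ∑ i ∈ Finset.Icc 1 K.nn, x i)
            / ((((Finset.Icc 1 K.nn).filter (fun i => x i = 0)).card:ℝ))), ?_, ?_, rfl⟩
        · intro i hi hxi
          have hc0 : 0 ≤ ((K.pp:ℝ) - ∑ i ∈ Finset.Icc 1 K.nn, x i)
              / ((((Finset.Icc 1 K.nn).filter (fun i => x i = 0)).card:ℝ)) :=
            div_nonneg (by linarith) hRpos.le
          have hc1 : ((K.pp:ℝ) - ∑ i ∈ Finset.Icc 1 K.nn, x i)
              / ((((Finset.Icc 1 K.nn).filter (fun i => x i = 0)).card:ℝ)) ≤ 1 := by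
            rw [div_le_one hRpos, hRcard]; linarith
          exact ⟨hc0, hc1, mul_nonneg (hd0 K i hi) hc0, by linarith⟩
        · rw [Finset.sum_const, nsmul_eq_mul, mul_div_cancel₀ _ (ne_of_gt hRpos)]
      · rintro val ⟨y, ρ, hfeas, hysum, rfl⟩
        have hfeasR : ∀ i ∈ (Finset.Icc 1 K.nn).filter (fun i => x i = 0),
            0 ≤ y i ∧ y i ≤ 1 ∧ 0 ≤ ρ i ∧ K.d i * y i ≤ π + ρ i := by
          intro i hi
          have hmem := Finset.mem_filter.mp hi
          exact hfeas i hmem.1 hmem.2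
        have hRu : (Finset.Icc 1 K.nn).filter (fun i => x i = 0)
            = J ∪ Finset.Icc (K.m+1) K.nn := by
          ext i
          simp only [hJdef, Finset.mem_filter, Finset.mem_union, Finset.mem_Icc]
          constructor
          · rintro ⟨⟨h1, h2⟩, h3⟩
            by_cases him : i ≤ K.m
            · exact Or.inl ⟨⟨h1, him⟩, h3⟩
            · exact Or.inr ⟨by omega, h2⟩
          · rintro (⟨⟨h1, h2⟩, h3⟩ | ⟨h1, h2⟩)
            · exact ⟨⟨h1, by omega⟩, h3⟩
            · exact ⟨⟨by omega, h2⟩, hcase1 i (Finset.mem_Icc.mpr ⟨h1, h2⟩)⟩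
        have hIccins : Finset.Icc (K.m+1) K.nn = insert (K.m+1) (Finset.Icc (K.m+2) K.nn) := by
          ext i; simp only [Finset.mem_Icc, Finset.mem_insert]; omega
        have hm1D : K.m+1 ∉ Finset.Icc (K.m+2) K.nn := by simp [Finset.mem_Icc]
        have hJdisj : Disjoint J (Finset.Icc (K.m+1) K.nn) := by
          rw [Finset.disjoint_left]; intro i h1 h2
          have ha := (Finset.mem_Icc.mp (Finset.filter_subset _ _ h1)).2
          have hb := (Finset.mem_Icc.mp h2).1
          omega
        have hJDdisj : Disjoint J (Finset.Icc (K.m+2) K.nn) := by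
          rw [Finset.disjoint_left]; intro i h1 h2
          have ha := (Finset.mem_Icc.mp (Finset.filter_subset _ _ h1)).2
          have hb := (Finset.mem_Icc.mp h2).1
          omega
        have hsumR : ∀ f : ℕ → ℝ, ∑ i ∈ (Finset.Icc 1 K.nn).filter (fun i => x i = 0), f i
            = ∑ i ∈ J, f i + (f (K.m+1) + ∑ i ∈ Finset.Icc (K.m+2) K.nn, f i) := by
          intro f
          rw [hRu, Finset.sum_union hJdisj, hIccins, Finset.sum_insert hm1D]
        have hUR : J ∪ Finset.Icc (K.m+2) K.nn ⊆ (Finset.Icc 1 K.nn).filter (fun i => x i = 0) := by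
          rw [hRu]
          apply Finset.union_subset Finset.subset_union_left
          intro i hi
          apply Finset.mem_union_right
          simp only [Finset.mem_Icc] at hi ⊢
          omega
        have hm1R : K.m+1 ∈ (Finset.Icc 1 K.nn).filter (fun i => x i = 0) := by
          rw [hRu]
          exact Finset.mem_union_right _ (Finset.mem_Icc.mpr ⟨le_refl _, hnnm⟩)
        set z : ℕ → ℝ := fun i => 1 - y i with hzdef
        have hzR : ∑ i ∈ (Finset.Icc 1 K.nn).filter (fun i => x i = 0), z i = (K.A':ℝ) := by
          have h1 : ∑ i ∈ (Finset.Icc 1 K.nn).filter (fun i => x i = 0), z i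
              = ((((Finset.Icc 1 K.nn).filter (fun i => x i = 0)).card:ℝ))
                - ∑ i ∈ (Finset.Icc 1 K.nn).filter (fun i => x i = 0), y i := by
            rw [hzdef, Finset.sum_sub_distrib, Finset.sum_const, nsmul_eq_mul, mul_one]
          rw [h1, hysum, hRcard]
          linear_combination (-1:ℝ) * hnpR
        have hUz : ∀ i ∈ J ∪ Finset.Icc (K.m+2) K.nn, 0 ≤ z i ∧ z i ≤ 1 := by
          intro i hi
          obtain ⟨h0, h1, _, _⟩ := hfeasR i (hUR hi)
          constructor
          · simp only [hzdef]; linarith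
          · simp only [hzdef]; linarith
        have hym1 := hfeasR (K.m+1) hm1R
        have hUzval : ∑ i ∈ J ∪ Finset.Icc (K.m+2) K.nn, z i
            = (K.A':ℝ) - 1 + y (K.m+1) := by
          have h1 := hsumR z
          rw [hzR] at h1
          rw [Finset.sum_union hJDdisj]
          have hzm1 : z (K.m+1) = 1 - y (K.m+1) := rfl
          linear_combination (-1 : ℝ) * h1 - hzm1
        have hZσ : (∑ j ∈ J, K.a' j) + 1/(K.b:ℝ) ≤ ∑ i ∈ J ∪ Finset.Icc (K.m+2) K.nn, z i := by
          rw [hUzval]; linarith [hym1.1]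
        obtain ⟨T, hTsub, hTcard, hTbound⟩ :=
          select K J (Finset.filter_subset _ _) z hUz hA2 hZσ
        have hTR : T ⊆ (Finset.Icc 1 K.nn).filter (fun i => x i = 0) := hTsub.trans hUR
        have hTbound' : K.M * (((K.m - K.A' + 1:ℕ):ℝ)
              - ∑ i ∈ J ∪ Finset.Icc (K.m+2) K.nn, z i + ∑ j ∈ J, K.a' j) + 2*(K.V:ℝ)
            ≤ ∑ i ∈ T, K.d i * y i := by
          refine le_trans hTbound (le_of_eq (Finset.sum_congr rfl (fun i _ => ?_)))
          simp only [hzdef]; ring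
        have hTπ : ∑ i ∈ T, K.d i * y i ≤ K.Gam * π
            + ∑ i ∈ (Finset.Icc 1 K.nn).filter (fun i => x i = 0), ρ i := by
          have h1 : ∑ i ∈ T, K.d i * y i ≤ ∑ i ∈ T, (π + ρ i) :=
            Finset.sum_le_sum (fun i hi => (hfeasR i (hTR hi)).2.2.2)
          have h2 : ∑ i ∈ T, (π + ρ i) = (T.card:ℝ)*π + ∑ i ∈ T, ρ i := by
            rw [Finset.sum_add_distrib, Finset.sum_const, nsmul_eq_mul]
          have h3 : (T.card:ℝ)*π ≤ K.Gam*π := by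
            apply mul_le_mul_of_nonneg_right _ hπ
            rw [hGamcast K]
            exact_mod_cast hTcard
          have h4 : ∑ i ∈ T, ρ i ≤ ∑ i ∈ (Finset.Icc 1 K.nn).filter (fun i => x i = 0), ρ i :=
            Finset.sum_le_sum_of_subset_of_nonneg hTR (fun i hi _ => (hfeasR i hi).2.2.1)
          linarith
        have hclbound : K.M * y (K.m+1)
            ≤ ∑ i ∈ (Finset.Icc 1 K.nn).filter (fun i => x i = 0), K.cl i * y i := by
          have h1 : K.cl (K.m+1) = K.M := by
            unfold KnapInstance.cl; rw [if_neg (by omega), if_pos rfl]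
          have h2 := Finset.single_le_sum
            (f := fun i => K.cl i * y i)
            (fun i hi => mul_nonneg (hcl0 K i (Finset.mem_filter.mp hi).1) (hfeasR i hi).1) hm1R
          have h2' : K.cl (K.m+1) * y (K.m+1)
              ≤ ∑ i ∈ (Finset.Icc 1 K.nn).filter (fun i => x i = 0), K.cl i * y i := by
            simpa using h2
          rw [h1] at h2'
          exact h2'
        have hCxs : ∑ i ∈ Finset.Icc 1 K.nn, K.C i * x i = K.M * ∑ i ∈ sel, K.a' i := by
          have hsplit : ∑ i ∈ Finset.Icc 1 K.nn, K.C i * x i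
              = ∑ i ∈ Finset.Icc 1 K.m, K.C i * x i
                + ∑ i ∈ Finset.Icc (K.m+1) K.nn, K.C i * x i := by
            rw [show Finset.Icc 1 K.nn = Finset.Ioc 0 K.nn from Finset.Icc_add_one_left_eq_Ioc 0 K.nn, show Finset.Icc 1 K.m = Finset.Ioc 0 K.m from Finset.Icc_add_one_left_eq_Ioc 0 K.m, Finset.Icc_add_one_left_eq_Ioc K.m K.nn]
            exact (Finset.sum_Ioc_consecutive _ (Nat.zero_le _) (by omega)).symm
          have hzero : ∑ i ∈ Finset.Icc (K.m+1) K.nn, K.C i * x i = 0 :=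
            Finset.sum_eq_zero (fun i hi => by rw [hcase1 i hi, mul_zero])
          have hfirst : ∑ i ∈ Finset.Icc 1 K.m, K.C i * x i
              = K.M * ∑ i ∈ Finset.Icc 1 K.m, K.a' i * x i := by
            rw [Finset.mul_sum]
            apply Finset.sum_congr rfl
            intro i hi
            unfold KnapInstance.C
            rw [if_pos (Finset.mem_Icc.mp hi).2]
            ring
          rw [hsplit, hzero, hfirst, hs_eq, add_zero]
        have hval_split : ∑ i ∈ (Finset.Icc 1 K.nn).filter (fun i => x i = 0),
              (K.cl i * y i + ρ i)
            = ∑ i ∈ (Finset.Icc 1 K.nn).filter (fun i => x i = 0), K.cl i * y i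
              + ∑ i ∈ (Finset.Icc 1 K.nn).filter (fun i => x i = 0), ρ i :=
          Finset.sum_add_distrib
        have hfin : K.M * (∑ i ∈ sel, K.a' i)
            + K.M * (((K.m - K.A' + 1:ℕ):ℝ)
                - ∑ i ∈ J ∪ Finset.Icc (K.m+2) K.nn, z i + ∑ j ∈ J, K.a' j)
            + K.M * y (K.m+1) = (K.Gam + 1) * K.M := by
          rw [hGamcast K, hUzval]
          linear_combination K.M * hsσ
        rw [hval_split]
        nlinarith [hTbound', hTπ, hclbound, hCxs, hfin,
          mul_le_mul_of_nonneg_left hclbound hM.le]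
    linarith [hgoal]
end
end

section
/- With the value of π fixed to π = M, the optimal value min over x ∈ {0,1}^n with Σ_{i=1}^n x_i ≤ p of h_x(M) equals (Γ + 1)M + V − OPT, where OPT = max{ Σ_{i∈S} v_i : S ⊆ [m], Σ_{i∈S} a_i ≤ b } is the optimal value of the knapsack instance. -/
open Classical
noncomputable section

/-- The optimal value of the knapsack instance:
`OPT = max { ∑_{i∈S} v_i : S ⊆ [m], ∑_{i∈S} a_i ≤ b }`. -/
def KnapInstance.OPT (K : KnapInstance) : ℕ :=
  ((Finset.Icc 1 K.m).powerset.filter (fun S => ∑ i ∈ S, K.a i ≤ K.b)).sup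
    (fun S => ∑ i ∈ S, K.v i)

namespace KnapInstance

variable (K : KnapInstance)

lemma b_two : 2 ≤ K.b := by
  have h := K.ha 1 (by simp [Finset.mem_Icc, K.hm])
  omega

lemma b_pos : 0 < K.b := by have := K.b_two; omega

lemma sum_a : ∑ i ∈ Finset.Icc 1 K.m, K.a i = K.A' * K.b :=
  (Nat.div_mul_cancel K.hb).symm

lemma m_le_suma : K.m ≤ ∑ i ∈ Finset.Icc 1 K.m, K.a i := by
  calc K.m = ∑ i ∈ Finset.Icc 1 K.m, 1 := by simp
  _ ≤ ∑ i ∈ Finset.Icc 1 K.m, K.a i :=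
    Finset.sum_le_sum (fun i hi => (K.ha i hi).1)

lemma A'_pos : 1 ≤ K.A' := by
  by_contra h
  have h0 : K.A' = 0 := by omega
  have := K.m_le_suma
  rw [K.sum_a, h0] at this
  simp at this
  exact absurd this (by have := K.hm; omega)

lemma A'_lt : K.A' < K.m := by
  have h1 : ∑ i ∈ Finset.Icc 1 K.m, K.a i ≤ K.m * (K.b - 1) := by
    calc ∑ i ∈ Finset.Icc 1 K.m, K.a i ≤ ∑ i ∈ Finset.Icc 1 K.m, (K.b - 1) :=
      Finset.sum_le_sum (fun i hi => (K.ha i hi).2)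
    _ = K.m * (K.b - 1) := by simp [mul_comm]
  rw [K.sum_a] at h1
  have hb := K.b_two
  have hm := K.hm
  have : K.A' * K.b < K.m * K.b := by
    have h2 : K.m * (K.b - 1) + K.m * 1 = K.m * K.b := by
      rw [← Nat.mul_add]; congr 1; omega
    omega
  exact Nat.lt_of_mul_lt_mul_right this

lemma m_le_V : K.m ≤ K.V := by
  unfold V
  calc K.m = ∑ i ∈ Finset.Icc 1 K.m, 1 := by simp
  _ ≤ ∑ i ∈ Finset.Icc 1 K.m, K.v i :=
    Finset.sum_le_sum (fun i hi => K.hv i hi)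

lemma V_pos : 1 ≤ K.V := le_trans K.hm K.m_le_V

lemma M_pos : 0 < K.M := by
  unfold M
  have h1 : (0:ℝ) < K.m := by exact_mod_cast K.hm
  have h2 : (0:ℝ) < K.b := by exact_mod_cast K.b_pos
  have h3 : (0:ℝ) < K.V := by exact_mod_cast K.V_pos
  positivity

lemma nn_m : K.m + 4 ≤ K.nn := by
  have := K.A'_lt; unfold nn; omega

lemma pp_le_nn : K.pp ≤ K.nn := by
  unfold nn pp; have := K.A'_lt; have := K.A'_pos; omega

lemma nn_cast : (K.nn : ℝ) = 2 * K.m - K.A' + 3 := by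
  unfold nn; have := K.A'_lt
  push_cast [Nat.cast_sub (by omega : K.A' ≤ 2 * K.m)]; ring

lemma pp_cast : (K.pp : ℝ) = 2 * K.m - 2 * K.A' + 3 := by
  unfold pp; have := K.A'_lt
  push_cast [Nat.cast_sub (by omega : 2 * K.A' ≤ 2 * K.m)]; ring

lemma card_Icc_m2 : (Finset.Icc (K.m+2) K.nn).card = K.m - K.A' + 2 := by
  rw [Nat.card_Icc]; have := K.A'_lt; unfold nn; omega

lemma sum_split (f : ℕ → ℝ) :
    ∑ i ∈ Finset.Icc 1 K.nn, f i =
      (∑ i ∈ Finset.Icc 1 K.m, f i) + f (K.m+1) + ∑ i ∈ Finset.Icc (K.m+2) K.nn, f i := by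
  have h4 := K.nn_m
  have e1 : Finset.Icc 1 K.nn = Finset.Ioc 0 K.nn := Finset.Icc_add_one_left_eq_Ioc 0 K.nn
  have e2 : Finset.Icc 1 K.m = Finset.Ioc 0 K.m := Finset.Icc_add_one_left_eq_Ioc 0 K.m
  have e3 : Finset.Icc (K.m+2) K.nn = Finset.Ioc (K.m+1) K.nn := Finset.Icc_add_one_left_eq_Ioc (K.m+1) K.nn
  rw [e1, e2, e3]
  rw [← Finset.sum_Ioc_consecutive f (by omega : 0 ≤ K.m+1) (by omega : K.m+1 ≤ K.nn)]
  rw [← Finset.sum_Ioc_consecutive f (by omega : 0 ≤ K.m) (by omega : K.m ≤ K.m+1)]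
  have : Finset.Ioc K.m (K.m+1) = {K.m+1} := by
    rw [Nat.Ioc_succ_singleton]
  rw [this]
  simp

lemma a'_lb (i : ℕ) (hi : i ∈ Finset.Icc 1 K.m) : 1 / (K.b:ℝ) ≤ K.a' i := by
  have h1 : (1:ℝ) ≤ K.a i := by exact_mod_cast (K.ha i hi).1
  have hb : (0:ℝ) < K.b := by exact_mod_cast K.b_pos
  unfold a'
  exact (div_le_div_iff_of_pos_right hb).mpr h1

lemma a'_ub (i : ℕ) (hi : i ∈ Finset.Icc 1 K.m) : K.a' i ≤ 1 - 1 / (K.b:ℝ) := by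
  have h2 : K.a i ≤ K.b - 1 := (K.ha i hi).2
  have hb2 := K.b_two
  have hb : (0:ℝ) < K.b := by exact_mod_cast K.b_pos
  have h2' : (K.a i : ℝ) ≤ (K.b:ℝ) - 1 := by
    have : (K.a i : ℝ) ≤ ((K.b - 1 : ℕ) : ℝ) := by exact_mod_cast h2
    rwa [Nat.cast_sub (by omega), Nat.cast_one] at this
  unfold a'
  rw [div_le_iff₀ hb]
  have : (1 - 1/(K.b:ℝ)) * K.b = K.b - 1 := by field_simp
  rw [this]; exact h2'

lemma w_lb (i : ℕ) (hi : i ∈ Finset.Icc 1 K.m) : 1 / (K.b:ℝ) ≤ 1 - K.a' i := by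
  have := K.a'_ub i hi; linarith

lemma w_pos (i : ℕ) (hi : i ∈ Finset.Icc 1 K.m) : 0 < 1 - K.a' i := by
  have h := K.w_lb i hi
  have hb : (0:ℝ) < K.b := by exact_mod_cast K.b_pos
  have : (0:ℝ) < 1 / K.b := by positivity
  linarith

lemma w_le_one (i : ℕ) (hi : i ∈ Finset.Icc 1 K.m) : 1 - K.a' i ≤ 1 := by
  have h1 := K.a'_lb i hi
  have hb : (0:ℝ) < K.b := by exact_mod_cast K.b_pos
  have : (0:ℝ) < 1 / K.b := by positivity
  linarith

lemma a'_nonneg (i : ℕ) : 0 ≤ K.a' i := by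
  unfold a'; positivity

lemma v_le_V (i : ℕ) (hi : i ∈ Finset.Icc 1 K.m) : (K.v i : ℝ) ≤ (K.V:ℝ) := by
  have : K.v i ≤ K.V := Finset.single_le_sum (f := fun j => K.v j) (fun j _ => Nat.zero_le _) hi
  exact_mod_cast this

lemma v_le_Mw (i : ℕ) (hi : i ∈ Finset.Icc 1 K.m) : (K.v i : ℝ) ≤ K.M * (1 - K.a' i) := by
  have h1 := K.w_lb i hi
  have hM := K.M_pos
  have hb : (0:ℝ) < K.b := by exact_mod_cast K.b_pos
  have hm1 : (1:ℝ) ≤ K.m := by exact_mod_cast K.hm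
  have hV0 : (0:ℝ) ≤ K.V := Nat.cast_nonneg _
  have h2 : K.M * (1/(K.b:ℝ)) = 3 * K.m * K.V := by
    unfold M; field_simp
  have h3 : (K.V:ℝ) ≤ K.M * (1/(K.b:ℝ)) := by
    rw [h2]; nlinarith
  calc (K.v i : ℝ) ≤ K.V := K.v_le_V i hi
  _ ≤ K.M * (1/(K.b:ℝ)) := h3
  _ ≤ K.M * (1 - K.a' i) := by
      apply mul_le_mul_of_nonneg_left h1 hM.le

lemma sum_a'_eq : ∑ i ∈ Finset.Icc 1 K.m, K.a' i = (K.A' : ℝ) := by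
  unfold a'
  rw [← Finset.sum_div]
  have hb : (K.b:ℝ) ≠ 0 := by
    have := K.b_pos; positivity
  rw [show (∑ i ∈ Finset.Icc 1 K.m, (K.a i : ℝ)) = ((∑ i ∈ Finset.Icc 1 K.m, K.a i : ℕ) : ℝ) by push_cast; ring]
  rw [K.sum_a]
  push_cast
  field_simp

lemma sum_a'_sub (S : Finset ℕ) (hS : S ⊆ Finset.Icc 1 K.m) :
    ∑ i ∈ S, K.a' i = ((∑ i ∈ S, K.a i : ℕ) : ℝ) / K.b := by
  unfold a'
  rw [← Finset.sum_div]
  push_cast; ring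

lemma cl_nonneg (i : ℕ) (hi : i ∈ Finset.Icc 1 K.nn) : 0 ≤ K.cl i := by
  unfold cl
  rcases le_or_gt i K.m with h | h
  · rw [if_pos h]
    have hw := K.w_pos i (Finset.mem_Icc.mpr ⟨(Finset.mem_Icc.mp hi).1, h⟩)
    have : (0:ℝ) ≤ K.v i := Nat.cast_nonneg _
    positivity
  · rw [if_neg (by omega)]
    split
    · exact K.M_pos.le
    · exact le_refl 0
lemma cl_m1 : K.cl (K.m+1) = K.M := by
  unfold cl; rw [if_neg (by omega), if_pos rfl]

lemma cl_dummy (i : ℕ) (hi : K.m + 2 ≤ i) : K.cl i = 0 := by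
  unfold cl; rw [if_neg (by omega), if_neg (by omega)]

lemma d_big (i : ℕ) (hi : K.m + 1 ≤ i) : K.d i = K.M := by
  unfold d; rw [if_neg (by omega)]

lemma C_m (i : ℕ) (hi : i ≤ K.m) : K.C i = K.M * K.a' i := by
  unfold C; rw [if_pos hi]

lemma C_big (i : ℕ) (hi : K.m + 1 ≤ i) : K.C i = ((K.m:ℝ) + 3) * K.M := by
  unfold C; rw [if_neg (by omega)]

lemma C_nonneg (i : ℕ) : 0 ≤ K.C i := by
  unfold C
  have hM := K.M_pos
  have ha := K.a'_nonneg i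
  have hm : (0:ℝ) ≤ K.m := Nat.cast_nonneg _
  split <;> nlinarith

lemma item_bound_main (i : ℕ) (hi : i ∈ Finset.Icc 1 K.m) {y ρ : ℝ}
    (hy0 : 0 ≤ y) (hy1 : y ≤ 1) (hρ : 0 ≤ ρ) (hc : K.d i * y ≤ K.M + ρ) :
    K.M * y - (K.M * (1 - K.a' i) - (K.v i : ℝ)) ≤ K.cl i * y + ρ := by
  have him : i ≤ K.m := (Finset.mem_Icc.mp hi).2
  have hw0 : 0 < 1 - K.a' i := K.w_pos i hi
  have hw1 : 1 - K.a' i ≤ 1 := K.w_le_one i hi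
  have hv0 : (0:ℝ) ≤ K.v i := Nat.cast_nonneg _
  have hvw : (K.v i : ℝ) ≤ K.M * (1 - K.a' i) := K.v_le_Mw i hi
  have hM := K.M_pos
  set w : ℝ := 1 - K.a' i with hw
  have hcl : K.cl i * w = K.v i := by
    simp only [cl, if_pos him]; exact div_mul_cancel₀ _ hw0.ne'
  have hd : K.d i * w = K.M := by
    simp only [d, if_pos him]; exact div_mul_cancel₀ _ hw0.ne'
  have hcl0 : 0 ≤ K.cl i := by
    simp only [cl, if_pos him]
    exact div_nonneg hv0 hw0.le
  have hcly : K.cl i * y * w = (K.v i : ℝ) * y := by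
    rw [mul_right_comm, hcl]
  have hdy : K.d i * y * w = K.M * y := by
    rw [mul_right_comm, hd]
  rcases le_or_gt y w with hyw | hyw
  · have key : (K.M * y - (K.M * w - K.v i) - (K.cl i * y + ρ)) * w ≤ 0 := by
      nlinarith [mul_nonneg hρ hw0.le, mul_nonneg (sub_nonneg.mpr hyw) (sub_nonneg.mpr hvw),
        mul_nonneg hcl0 (mul_nonneg hy0 hw0.le)]
    nlinarith [key, hw0]
  · have hcw : K.d i * y * w ≤ (K.M + ρ) * w :=
      mul_le_mul_of_nonneg_right hc hw0.le
    rw [hdy] at hcw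
    have key : (K.M * y - (K.M * w - K.v i) - (K.cl i * y + ρ)) * w ≤ 0 := by
      nlinarith [mul_nonneg (mul_nonneg hM.le (sub_nonneg.mpr hyw.le)) (sub_nonneg.mpr hw1),
        mul_nonneg hv0 (sub_nonneg.mpr hyw.le)]
    nlinarith [key, hw0]

lemma item_bound_m1 {y ρ : ℝ} (hρ : 0 ≤ ρ) :
    K.M * y - 0 ≤ K.cl (K.m+1) * y + ρ := by
  rw [K.cl_m1]; linarith

lemma item_bound_dummy (i : ℕ) (hi : K.m + 2 ≤ i) {y ρ : ℝ}
    (hc : K.d i * y ≤ K.M + ρ) :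
    K.M * y - K.M ≤ K.cl i * y + ρ := by
  rw [K.cl_dummy i hi]
  rw [K.d_big i (by omega)] at hc
  linarith

lemma g_nonneg (x : ℕ → ℝ) (π : ℝ) : 0 ≤ K.g x π := by
  apply Real.sInf_nonneg
  rintro val ⟨y, ρ, hcon, hsum, rfl⟩
  apply Finset.sum_nonneg
  intro i hi
  rw [Finset.mem_filter] at hi
  obtain ⟨h0, h1, h2, h3⟩ := hcon i hi.1 hi.2
  have := K.cl_nonneg i hi.1
  positivity
lemma inner_val_nonneg (x : ℕ → ℝ) {y ρ : ℕ → ℝ}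
    (hcon : ∀ i ∈ Finset.Icc 1 K.nn, x i = 0 →
      (0 ≤ y i ∧ y i ≤ 1 ∧ 0 ≤ ρ i ∧ K.d i * y i ≤ K.M + ρ i)) :
    0 ≤ ∑ i ∈ (Finset.Icc 1 K.nn).filter (fun i => x i = 0), (K.cl i * y i + ρ i) := by
  apply Finset.sum_nonneg
  intro i hi
  rw [Finset.mem_filter] at hi
  obtain ⟨h0, h1, h2, h3⟩ := hcon i hi.1 hi.2
  have := K.cl_nonneg i hi.1
  positivity

lemma g_le (x : ℕ → ℝ) (y ρ : ℕ → ℝ)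
    (hcon : ∀ i ∈ Finset.Icc 1 K.nn, x i = 0 →
      (0 ≤ y i ∧ y i ≤ 1 ∧ 0 ≤ ρ i ∧ K.d i * y i ≤ K.M + ρ i))
    (hsumy : ∑ i ∈ (Finset.Icc 1 K.nn).filter (fun i => x i = 0), y i
      = (K.pp : ℝ) - ∑ i ∈ Finset.Icc 1 K.nn, x i) :
    K.g x K.M ≤ ∑ i ∈ (Finset.Icc 1 K.nn).filter (fun i => x i = 0), (K.cl i * y i + ρ i) := by
  unfold g
  apply csInf_le
  · refine ⟨0, ?_⟩
    rintro val ⟨y', ρ', hc', hs', rfl⟩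
    exact K.inner_val_nonneg x hc'
  · exact ⟨y, ρ, hcon, hsumy, rfl⟩

lemma le_g (x : ℕ → ℝ) (L : ℝ) (y₀ ρ₀ : ℕ → ℝ)
    (hcon₀ : ∀ i ∈ Finset.Icc 1 K.nn, x i = 0 →
      (0 ≤ y₀ i ∧ y₀ i ≤ 1 ∧ 0 ≤ ρ₀ i ∧ K.d i * y₀ i ≤ K.M + ρ₀ i))
    (hsumy₀ : ∑ i ∈ (Finset.Icc 1 K.nn).filter (fun i => x i = 0), y₀ i
      = (K.pp : ℝ) - ∑ i ∈ Finset.Icc 1 K.nn, x i)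
    (hall : ∀ y ρ : ℕ → ℝ,
      (∀ i ∈ Finset.Icc 1 K.nn, x i = 0 →
        (0 ≤ y i ∧ y i ≤ 1 ∧ 0 ≤ ρ i ∧ K.d i * y i ≤ K.M + ρ i)) →
      (∑ i ∈ (Finset.Icc 1 K.nn).filter (fun i => x i = 0), y i
        = (K.pp : ℝ) - ∑ i ∈ Finset.Icc 1 K.nn, x i) →
      L ≤ ∑ i ∈ (Finset.Icc 1 K.nn).filter (fun i => x i = 0), (K.cl i * y i + ρ i)) :
    L ≤ K.g x K.M := by
  unfold g
  refine le_csInf ⟨_, ⟨y₀, ρ₀, hcon₀, hsumy₀, rfl⟩⟩ ?_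
  rintro val ⟨y, ρ, hc, hs, rfl⟩
  exact hall y ρ hc hs

lemma sum_mul_x (x : ℕ → ℝ) (hbin : ∀ i ∈ Finset.Icc 1 K.nn, x i = 0 ∨ x i = 1) (f : ℕ → ℝ) :
    ∑ i ∈ Finset.Icc 1 K.nn, f i * x i
      = ∑ i ∈ (Finset.Icc 1 K.nn).filter (fun i => x i = 1), f i := by
  rw [Finset.sum_filter]
  apply Finset.sum_congr rfl
  intro i hi
  rcases hbin i hi with h0 | h1
  · rw [if_neg (by rw [h0]; norm_num), h0, mul_zero]
  · rw [if_pos h1, h1, mul_one]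

lemma sum_x_eq (x : ℕ → ℝ) (hbin : ∀ i ∈ Finset.Icc 1 K.nn, x i = 0 ∨ x i = 1) :
    ∑ i ∈ Finset.Icc 1 K.nn, x i
      = (((Finset.Icc 1 K.nn).filter (fun i => x i = 1)).card : ℝ) := by
  have h := K.sum_mul_x x hbin (fun _ => (1:ℝ))
  simp only [one_mul] at h
  rw [h, Finset.sum_const, nsmul_eq_mul, mul_one]

lemma filter_one_eq (x : ℕ → ℝ) (hx0 : ∀ i ∈ Finset.Icc (K.m+1) K.nn, x i = 0) :
    (Finset.Icc 1 K.nn).filter (fun i => x i = 1)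
      = (Finset.Icc 1 K.m).filter (fun i => x i = 1) := by
  have h4 := K.nn_m
  ext i
  simp only [Finset.mem_filter, Finset.mem_Icc]
  constructor
  · rintro ⟨⟨h1, h2⟩, hx⟩
    refine ⟨⟨h1, ?_⟩, hx⟩
    by_contra hmi
    have h0 := hx0 i (Finset.mem_Icc.mpr ⟨by omega, h2⟩)
    rw [h0] at hx; norm_num at hx
  · rintro ⟨⟨h1, h2⟩, hx⟩
    exact ⟨⟨h1, by omega⟩, hx⟩

lemma sum_filter_eq (x : ℕ → ℝ) (hbin : ∀ i ∈ Finset.Icc 1 K.nn, x i = 0 ∨ x i = 1)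
    (hx0 : ∀ i ∈ Finset.Icc (K.m+1) K.nn, x i = 0) (f : ℕ → ℝ) :
    ∑ i ∈ (Finset.Icc 1 K.nn).filter (fun i => x i = 0), f i
      = ((∑ i ∈ Finset.Icc 1 K.m, f i)
          - ∑ i ∈ (Finset.Icc 1 K.m).filter (fun i => x i = 1), f i)
        + f (K.m+1) + ∑ i ∈ Finset.Icc (K.m+2) K.nn, f i := by
  have h4 := K.nn_m
  rw [Finset.sum_filter, K.sum_split]
  congr 1
  · congr 1
    · rw [Finset.sum_filter, ← Finset.sum_sub_distrib]
      apply Finset.sum_congr rfl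
      intro i hi
      have hii : i ∈ Finset.Icc 1 K.nn := by
        rw [Finset.mem_Icc] at hi ⊢
        omega
      rcases hbin i hii with h0 | h1
      · rw [if_pos h0, if_neg (by rw [h0]; norm_num)]; ring
      · rw [if_neg (by rw [h1]; norm_num), if_pos h1]; ring
    · rw [if_pos (hx0 (K.m+1) (by rw [Finset.mem_Icc]; omega))]
  · apply Finset.sum_congr rfl
    intro i hi
    rw [Finset.mem_Icc] at hi
    rw [if_pos (hx0 i (by rw [Finset.mem_Icc]; omega))]

lemma exists_feasible (x : ℕ → ℝ) (hbin : ∀ i ∈ Finset.Icc 1 K.nn, x i = 0 ∨ x i = 1)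
    (hsum : ∑ i ∈ Finset.Icc 1 K.nn, x i ≤ (K.pp : ℝ)) :
    ∃ y₀ ρ₀ : ℕ → ℝ,
      (∀ i ∈ Finset.Icc 1 K.nn, x i = 0 →
        (0 ≤ y₀ i ∧ y₀ i ≤ 1 ∧ 0 ≤ ρ₀ i ∧ K.d i * y₀ i ≤ K.M + ρ₀ i)) ∧
      (∑ i ∈ (Finset.Icc 1 K.nn).filter (fun i => x i = 0), y₀ i
        = (K.pp : ℝ) - ∑ i ∈ Finset.Icc 1 K.nn, x i) := by
  classical
  set S1 := (Finset.Icc 1 K.nn).filter (fun i => x i = 1) with hS1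
  set R := (Finset.Icc 1 K.nn).filter (fun i => x i = 0) with hR
  have hxc : ∑ i ∈ Finset.Icc 1 K.nn, x i = (S1.card : ℝ) := K.sum_x_eq x hbin
  have hcard1 : S1.card ≤ K.pp := by
    have : (S1.card : ℝ) ≤ (K.pp : ℝ) := by rw [← hxc]; exact hsum
    exact_mod_cast this
  have hRS : R = (Finset.Icc 1 K.nn).filter (fun i => ¬ x i = 1) := by
    apply Finset.filter_congr
    intro i hi
    rcases hbin i hi with h0 | h1
    · simp [h0]
    · simp [h1]
  have hcardR : R.card + S1.card = K.nn := by
    have hc := Finset.card_filter_add_card_filter_not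
      (s := Finset.Icc 1 K.nn) (p := fun i => x i = 1)
    rw [Nat.card_Icc] at hc
    rw [hRS, hS1]
    omega
  have hppnn : K.pp + 1 ≤ K.nn := by
    unfold pp nn
    have := K.A'_pos
    have := K.A'_lt
    omega
  have hRpos : 0 < R.card := by omega
  refine ⟨fun _ => ((K.pp : ℝ) - S1.card) / R.card, fun i => max (K.d i * (((K.pp : ℝ) - S1.card) / R.card) - K.M) 0, ?_, ?_⟩
  · intro i hi hx0
    have hy0 : 0 ≤ ((K.pp : ℝ) - S1.card) / R.card := by
      apply div_nonneg
      · have : (S1.card : ℝ) ≤ K.pp := by exact_mod_cast hcard1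
        linarith
      · positivity
    have hy1 : ((K.pp : ℝ) - S1.card) / R.card ≤ 1 := by
      rw [div_le_one (by exact_mod_cast hRpos)]
      have h1 : (K.pp : ℝ) ≤ (K.nn : ℝ) := by exact_mod_cast Nat.le_of_succ_le hppnn
      have h2 : (R.card : ℝ) + S1.card = K.nn := by exact_mod_cast hcardR
      linarith
    refine ⟨hy0, hy1, le_max_right _ _, ?_⟩
    have := le_max_left (K.d i * (((K.pp : ℝ) - S1.card) / R.card) - K.M) 0
    linarith
  · have hR0 : ((R.card : ℕ) : ℝ) ≠ 0 := by
      exact_mod_cast hRpos.ne'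
    rw [Finset.sum_const, nsmul_eq_mul, hxc]
    field_simp
lemma A'_le_m_real : (K.A':ℝ) ≤ (K.m:ℝ) - 1 := by
  have h : K.A' + 1 ≤ K.m := K.A'_lt
  have : ((K.A' + 1 : ℕ):ℝ) ≤ (K.m:ℝ) := by exact_mod_cast h
  push_cast at this; linarith

lemma sum_one_sub_a' : ∑ i ∈ Finset.Icc 1 K.m, (1 - K.a' i) = (K.m:ℝ) - K.A' := by
  rw [Finset.sum_sub_distrib, Finset.sum_const, K.sum_a'_eq, Nat.card_Icc]
  simp

lemma sum_v_real : ∑ i ∈ Finset.Icc 1 K.m, (K.v i:ℝ) = (K.V:ℝ) := by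
  unfold V; push_cast; ring

lemma h_lb (x : ℕ → ℝ) (hbin : ∀ i ∈ Finset.Icc 1 K.nn, x i = 0 ∨ x i = 1)
    (hsum : ∑ i ∈ Finset.Icc 1 K.nn, x i ≤ (K.pp : ℝ)) :
    (K.Gam + 1) * K.M + (K.V : ℝ) - (K.OPT : ℝ) ≤ K.h x K.M := by
  classical
  have hM := K.M_pos
  have hm1 : (1:ℝ) ≤ K.m := by exact_mod_cast K.hm
  have hb2 : (2:ℝ) ≤ K.b := by exact_mod_cast K.b_two
  have hbp : (0:ℝ) < K.b := by linarith
  have hV1 : (1:ℝ) ≤ K.V := by exact_mod_cast K.V_pos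
  have hOPT0 : (0:ℝ) ≤ K.OPT := Nat.cast_nonneg _
  have hMdef : K.M = 3 * K.m * K.b * K.V := rfl
  have hMV : (K.V:ℝ) ≤ K.M := by
    rw [hMdef]; nlinarith [mul_le_mul hm1 hb2 (by norm_num) (by linarith : (0:ℝ) ≤ K.m)]
  have hMb : (K.V:ℝ) ≤ K.M * (1/(K.b:ℝ)) := by
    have he : K.M * (1/(K.b:ℝ)) = 3*(K.m:ℝ)*K.V := by
      rw [hMdef]; field_simp
    rw [he]; nlinarith [hm1, hV1]
  have hterm : ∀ i ∈ Finset.Icc 1 K.nn, 0 ≤ K.C i * x i := by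
    intro i hi
    rcases hbin i hi with h | h
    · rw [h, mul_zero]
    · rw [h, mul_one]; exact K.C_nonneg i
  by_cases hA : ∃ j ∈ Finset.Icc (K.m+1) K.nn, x j = 1
  · obtain ⟨j, hj, hxj⟩ := hA
    have hjnn : j ∈ Finset.Icc 1 K.nn := by
      rw [Finset.mem_Icc] at hj ⊢; omega
    have hCx : ((K.m:ℝ)+3) * K.M ≤ ∑ i ∈ Finset.Icc 1 K.nn, K.C i * x i := by
      have h1 := Finset.single_le_sum hterm hjnn
      rw [hxj, mul_one, K.C_big j (Finset.mem_Icc.mp hj).1] at h1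
      exact h1
    have hg := K.g_nonneg x K.M
    have h3 : 3 * K.M ≤ ((K.m:ℝ)+3) * K.M := by nlinarith
    unfold h
    linarith
  · push_neg at hA
    have hx0 : ∀ i ∈ Finset.Icc (K.m+1) K.nn, x i = 0 := by
      intro i hi
      have hinn : i ∈ Finset.Icc 1 K.nn := by
        rw [Finset.mem_Icc] at hi ⊢; omega
      rcases hbin i hinn with h | h
      · exact h
      · exact absurd h (hA i hi)
    set S := (Finset.Icc 1 K.m).filter (fun i => x i = 1) with hS
    have hSsub : S ⊆ Finset.Icc 1 K.m := Finset.filter_subset _ _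
    set σ : ℝ := ∑ i ∈ S, K.a' i with hσ
    set aS : ℕ := ∑ i ∈ S, K.a i with haS
    have hσa : σ = (aS:ℝ)/K.b := K.sum_a'_sub S hSsub
    set vS : ℝ := ∑ i ∈ S, (K.v i:ℝ) with hvS
    have hσ0 : 0 ≤ σ := Finset.sum_nonneg (fun i _ => K.a'_nonneg i)
    have hx_eq : ∑ i ∈ Finset.Icc 1 K.nn, x i = (S.card:ℝ) := by
      rw [K.sum_x_eq x hbin, K.filter_one_eq x hx0]
    have hCx : ∑ i ∈ Finset.Icc 1 K.nn, K.C i * x i = K.M * σ := by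
      rw [K.sum_mul_x x hbin K.C, K.filter_one_eq x hx0, ← hS, hσ, Finset.mul_sum]
      apply Finset.sum_congr rfl
      intro i hi
      exact K.C_m i (Finset.mem_Icc.mp (hSsub hi)).2
    rcases le_or_gt σ 1 with hσ1 | hσ1
    · -- knapsack-feasible selection
      have haSb : aS ≤ K.b := by
        have h1 : (aS:ℝ) ≤ K.b := by
          rw [hσa] at hσ1
          exact (div_le_one hbp).mp hσ1
        exact_mod_cast h1
      have hvOPT : vS ≤ (K.OPT:ℝ) := by
        have h1 : ∑ i ∈ S, K.v i ≤ K.OPT := by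
          apply Finset.le_sup (f := fun T => ∑ i ∈ T, K.v i)
          rw [Finset.mem_filter, Finset.mem_powerset]
          exact ⟨hSsub, haSb⟩
        have h2 : vS = ((∑ i ∈ S, K.v i : ℕ):ℝ) := by rw [hvS]; push_cast; ring
        rw [h2]; exact_mod_cast h1
      obtain ⟨y₀, ρ₀, hc₀, hs₀⟩ := K.exists_feasible x hbin hsum
      have hglb : K.M * (1 - σ) + ((K.V:ℝ) - vS) ≤ K.g x K.M := by
        apply K.le_g x _ y₀ ρ₀ hc₀ hs₀
        intro y ρ hc hs
        set q : ℕ → ℝ := fun i =>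
          if i ≤ K.m then K.M * (1 - K.a' i) - K.v i else if i = K.m+1 then 0 else K.M with hq
        have step1 : ∑ i ∈ (Finset.Icc 1 K.nn).filter (fun i => x i = 0), (K.M * y i - q i)
            ≤ ∑ i ∈ (Finset.Icc 1 K.nn).filter (fun i => x i = 0), (K.cl i * y i + ρ i) := by
          apply Finset.sum_le_sum
          intro i hi
          rw [Finset.mem_filter] at hi
          obtain ⟨hy0, hy1, hρ0, hd⟩ := hc i hi.1 hi.2
          have hi1 : 1 ≤ i := (Finset.mem_Icc.mp hi.1).1
          by_cases him : i ≤ K.m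
          · rw [hq]; simp only [if_pos him]
            exact K.item_bound_main i (Finset.mem_Icc.mpr ⟨hi1, him⟩) hy0 hy1 hρ0 hd
          · by_cases him1 : i = K.m+1
            · subst him1
              rw [hq]; simp only [if_neg him, if_pos rfl]
              exact K.item_bound_m1 hρ0
            · rw [hq]; simp only [if_neg him, if_neg him1]
              exact K.item_bound_dummy i (by omega) hd
        have step2 : ∑ i ∈ (Finset.Icc 1 K.nn).filter (fun i => x i = 0), (K.M * y i - q i)
            = K.M * ((K.pp:ℝ) - (S.card:ℝ))
              - ∑ i ∈ (Finset.Icc 1 K.nn).filter (fun i => x i = 0), q i := by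
          rw [Finset.sum_sub_distrib, ← Finset.mul_sum, hs, hx_eq]
        have hq1 : ∑ i ∈ Finset.Icc 1 K.m, q i = K.M * ((K.m:ℝ) - K.A') - K.V := by
          have : ∀ i ∈ Finset.Icc 1 K.m, q i = K.M * (1 - K.a' i) - K.v i := by
            intro i hi; rw [hq]; simp only [if_pos (Finset.mem_Icc.mp hi).2]
          rw [Finset.sum_congr rfl this, Finset.sum_sub_distrib, ← Finset.mul_sum,
            K.sum_one_sub_a', K.sum_v_real]
        have hq2 : ∑ i ∈ S, q i = K.M * ((S.card:ℝ) - σ) - vS := by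
          have h1 : ∀ i ∈ S, q i = K.M * (1 - K.a' i) - K.v i := by
            intro i hi; rw [hq]; simp only [if_pos (Finset.mem_Icc.mp (hSsub hi)).2]
          rw [Finset.sum_congr rfl h1, Finset.sum_sub_distrib, ← Finset.mul_sum]
          rw [Finset.sum_sub_distrib, Finset.sum_const, nsmul_eq_mul, mul_one, ← hσ, ← hvS]
        have hq3 : q (K.m+1) = 0 := by
          have h1 : ¬ (K.m+1 ≤ K.m) := by omega
          rw [hq]; simp [h1]
        have hq4 : ∑ i ∈ Finset.Icc (K.m+2) K.nn, q i = K.M * ((K.m:ℝ) - K.A' + 2) := by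
          have h1 : ∀ i ∈ Finset.Icc (K.m+2) K.nn, q i = K.M := by
            intro i hi
            have := (Finset.mem_Icc.mp hi).1
            rw [hq]; simp only [if_neg (by omega : ¬ i ≤ K.m), if_neg (by omega : ¬ i = K.m+1)]
          rw [Finset.sum_congr rfl h1, Finset.sum_const, K.card_Icc_m2, nsmul_eq_mul]
          have hc2 : ((K.m - K.A' + 2 : ℕ):ℝ) = (K.m:ℝ) - K.A' + 2 := by
            have := K.A'_lt
            push_cast [Nat.cast_sub (by omega : K.A' ≤ K.m)]
            ring
          rw [hc2]; ring
        have hqR : ∑ i ∈ (Finset.Icc 1 K.nn).filter (fun i => x i = 0), q i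
            = ((K.M * ((K.m:ℝ) - K.A') - K.V) - (K.M * ((S.card:ℝ) - σ) - vS))
              + 0 + K.M * ((K.m:ℝ) - K.A' + 2) := by
          rw [K.sum_filter_eq x hbin hx0 q, hq1, ← hS, hq2, hq3, hq4]
        have hfin : K.M * ((K.pp:ℝ) - (S.card:ℝ))
            - ∑ i ∈ (Finset.Icc 1 K.nn).filter (fun i => x i = 0), q i
            = K.M * (1 - σ) + ((K.V:ℝ) - vS) := by
          rw [hqR, K.pp_cast]; ring
        calc K.M * (1 - σ) + ((K.V:ℝ) - vS)
            = ∑ i ∈ (Finset.Icc 1 K.nn).filter (fun i => x i = 0), (K.M * y i - q i) := by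
              rw [step2, hfin]
          _ ≤ _ := step1
      unfold h
      rw [hCx]
      have hgam : K.Gam = (K.m:ℝ) - K.A' + 1 := rfl
      nlinarith [hglb, hvOPT]
    · -- knapsack-infeasible selection
      have haSb : K.b + 1 ≤ aS := by
        have h1 : (K.b:ℝ) < aS := by
          rw [hσa] at hσ1
          exact (one_lt_div hbp).mp hσ1
        exact_mod_cast h1
      have hσlb : 1 + 1/(K.b:ℝ) ≤ σ := by
        rw [hσa]
        have h1 : ((K.b:ℝ) + 1) ≤ (aS:ℝ) := by exact_mod_cast haSb
        rw [le_div_iff₀ hbp]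
        have : (1 + 1/(K.b:ℝ)) * K.b = K.b + 1 := by field_simp
        rw [this]; exact h1
      have hg := K.g_nonneg x K.M
      have hMσ : K.M * (1 + 1/(K.b:ℝ)) ≤ K.M * σ :=
        mul_le_mul_of_nonneg_left hσlb hM.le
      have hexp : K.M * (1 + 1/(K.b:ℝ)) = K.M + K.M * (1/(K.b:ℝ)) := by ring
      unfold h
      rw [hCx]
      linarith
lemma cl_mul_w (i : ℕ) (hi : i ∈ Finset.Icc 1 K.m) : K.cl i * (1 - K.a' i) = K.v i := by
  have hw := K.w_pos i hi
  simp only [cl, if_pos (Finset.mem_Icc.mp hi).2]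
  field_simp

lemma opt_achieved : ∃ T ∈ ((Finset.Icc 1 K.m).powerset.filter (fun S => ∑ i ∈ S, K.a i ≤ K.b)),
    K.OPT = ∑ i ∈ T, K.v i := by
  apply Finset.exists_mem_eq_sup
  refine ⟨∅, ?_⟩
  rw [Finset.mem_filter, Finset.mem_powerset]
  exact ⟨Finset.empty_subset _, by simp⟩

lemma h_ub : ∃ x : ℕ → ℝ,
    (∀ i ∈ Finset.Icc 1 K.nn, x i = 0 ∨ x i = 1) ∧
    (∑ i ∈ Finset.Icc 1 K.nn, x i ≤ (K.pp : ℝ)) ∧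
    K.h x K.M ≤ (K.Gam + 1) * K.M + (K.V:ℝ) - (K.OPT:ℝ) := by
  classical
  have hM := K.M_pos
  have hb2 : (2:ℝ) ≤ K.b := by exact_mod_cast K.b_two
  have hbp : (0:ℝ) < K.b := by linarith
  obtain ⟨T, hT, hOPTeq⟩ := K.opt_achieved
  rw [Finset.mem_filter, Finset.mem_powerset] at hT
  obtain ⟨hTsub, hTa⟩ := hT
  set x : ℕ → ℝ := fun i => if i ∈ T then 1 else 0 with hx
  have hbin : ∀ i ∈ Finset.Icc 1 K.nn, x i = 0 ∨ x i = 1 := by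
    intro i _
    by_cases h : i ∈ T
    · right; simp [hx, h]
    · left; simp [hx, h]
  set σT : ℝ := ∑ i ∈ T, K.a' i with hσT
  set vT : ℝ := ∑ i ∈ T, (K.v i : ℝ) with hvT
  have hσTa : σT = ((∑ i ∈ T, K.a i : ℕ):ℝ) / K.b := K.sum_a'_sub T hTsub
  have hσT0 : 0 ≤ σT := Finset.sum_nonneg (fun i _ => K.a'_nonneg i)
  have hσT1 : σT ≤ 1 := by
    rw [hσTa, div_le_one hbp]
    exact_mod_cast hTa
  have hvTOPT : vT = (K.OPT:ℝ) := by
    rw [hvT, hOPTeq]; push_cast; ring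
  -- cardinality bound
  have hTm : T.card ≤ K.m := by
    have := Finset.card_le_card hTsub
    rwa [Nat.card_Icc, Nat.add_sub_cancel] at this
  have hcardT : T.card + K.A' ≤ K.m + 1 := by
    have hsd : ∑ i ∈ Finset.Icc 1 K.m \ T, K.a i + ∑ i ∈ T, K.a i
        = ∑ i ∈ Finset.Icc 1 K.m, K.a i := Finset.sum_sdiff hTsub
    have hsd2 : ∑ i ∈ Finset.Icc 1 K.m \ T, K.a i ≤ (K.m - T.card) * (K.b - 1) := by
      have hcard : (Finset.Icc 1 K.m \ T).card = K.m - T.card := by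
        rw [Finset.card_sdiff_of_subset hTsub, Nat.card_Icc, Nat.add_sub_cancel]
      calc ∑ i ∈ Finset.Icc 1 K.m \ T, K.a i
          ≤ ∑ _i ∈ Finset.Icc 1 K.m \ T, (K.b - 1) :=
            Finset.sum_le_sum (fun i hi => (K.ha i (Finset.sdiff_subset hi)).2)
        _ = (K.m - T.card) * (K.b - 1) := by rw [Finset.sum_const, hcard, smul_eq_mul]
    have hA'b : K.A' * K.b ≤ (1 + (K.m - T.card)) * K.b := by
      have h1 : K.A' * K.b = ∑ i ∈ Finset.Icc 1 K.m, K.a i := K.sum_a.symm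
      have h2 : (K.m - T.card) * (K.b - 1) ≤ (K.m - T.card) * K.b :=
        Nat.mul_le_mul_left _ (by omega)
      calc K.A' * K.b = ∑ i ∈ Finset.Icc 1 K.m, K.a i := h1
        _ = ∑ i ∈ Finset.Icc 1 K.m \ T, K.a i + ∑ i ∈ T, K.a i := hsd.symm
        _ ≤ (K.m - T.card) * (K.b - 1) + K.b := by omega
        _ ≤ (1 + (K.m - T.card)) * K.b := by
            have := h2; ring_nf; omega
    have hA'le : K.A' ≤ 1 + (K.m - T.card) :=
      Nat.le_of_mul_le_mul_right hA'b K.b_pos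
    omega
  have hTpp : T.card ≤ K.pp := by
    have h1 := K.A'_lt
    have h2 : K.pp = 2 * K.m - 2 * K.A' + 3 := rfl
    omega
  have hTnn : T ⊆ Finset.Icc 1 K.nn := by
    intro i hi
    have := Finset.mem_Icc.mp (hTsub hi)
    have := K.nn_m
    rw [Finset.mem_Icc]; omega
  have hsumx : ∑ i ∈ Finset.Icc 1 K.nn, x i = (T.card:ℝ) := by
    rw [hx]
    rw [Finset.sum_ite_mem, Finset.inter_eq_right.mpr hTnn,
      Finset.sum_const, nsmul_eq_mul, mul_one]
  have hsumle : ∑ i ∈ Finset.Icc 1 K.nn, x i ≤ (K.pp : ℝ) := by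
    rw [hsumx]; exact_mod_cast hTpp
  have hx0 : ∀ i ∈ Finset.Icc (K.m+1) K.nn, x i = 0 := by
    intro i hi
    have hiT : i ∉ T := by
      intro hmem
      have := Finset.mem_Icc.mp (hTsub hmem)
      have := Finset.mem_Icc.mp hi
      omega
    simp [hx, hiT]
  have hfil : (Finset.Icc 1 K.m).filter (fun i => x i = 1) = T := by
    ext i
    rw [Finset.mem_filter]
    constructor
    · rintro ⟨_, hxi⟩
      by_contra hiT
      rw [hx] at hxi; simp [hiT] at hxi
    · intro hiT
      exact ⟨hTsub hiT, by simp [hx, hiT]⟩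
  have hCx : ∑ i ∈ Finset.Icc 1 K.nn, K.C i * x i = K.M * σT := by
    rw [K.sum_mul_x x hbin K.C, K.filter_one_eq x hx0, hfil, hσT, Finset.mul_sum]
    apply Finset.sum_congr rfl
    intro i hi
    exact K.C_m i (Finset.mem_Icc.mp (hTsub hi)).2
  -- second-stage witness
  set Y : ℕ → ℝ := fun i => if i ≤ K.m then 1 - K.a' i else if i = K.m+1 then 1 - σT else 1
    with hY
  have hYm1 : Y (K.m+1) = 1 - σT := by
    have h1 : ¬ (K.m+1 ≤ K.m) := by omega
    rw [hY]; simp [h1]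
  have hYdummy : ∀ i ∈ Finset.Icc (K.m+2) K.nn, Y i = 1 := by
    intro i hi
    have := (Finset.mem_Icc.mp hi).1
    rw [hY]; simp only [if_neg (by omega : ¬ i ≤ K.m), if_neg (by omega : ¬ i = K.m+1)]
  have hcon : ∀ i ∈ Finset.Icc 1 K.nn, x i = 0 →
      (0 ≤ Y i ∧ Y i ≤ 1 ∧ 0 ≤ (fun _ : ℕ => (0:ℝ)) i ∧
        K.d i * Y i ≤ K.M + (fun _ : ℕ => (0:ℝ)) i) := by
    intro i hi _
    show 0 ≤ Y i ∧ Y i ≤ 1 ∧ (0:ℝ) ≤ 0 ∧ K.d i * Y i ≤ K.M + 0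
    by_cases him : i ≤ K.m
    · have himm : i ∈ Finset.Icc 1 K.m :=
        Finset.mem_Icc.mpr ⟨(Finset.mem_Icc.mp hi).1, him⟩
      have hw := K.w_pos i himm
      have hw1 := K.w_le_one i himm
      have hYi : Y i = 1 - K.a' i := by rw [hY]; simp [him]
      have hdi : K.d i = K.M / (1 - K.a' i) := by unfold d; rw [if_pos him]
      refine ⟨by rw [hYi]; linarith, by rw [hYi]; linarith, le_refl 0, ?_⟩
      rw [hYi, hdi]
      have : K.M / (1 - K.a' i) * (1 - K.a' i) = K.M := by field_simp
      rw [this]; linarith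
    · have hdi : K.d i = K.M := K.d_big i (by omega)
      by_cases him1 : i = K.m+1
      · subst him1
        rw [hYm1, hdi]
        refine ⟨by linarith, by linarith, le_refl 0, by nlinarith⟩
      · have hYi : Y i = 1 := by
          rw [hY]; simp only [if_neg him, if_neg him1]
        rw [hYi, hdi]
        refine ⟨by norm_num, le_refl 1, le_refl 0, by linarith⟩
  have hsumT_a' : ∑ i ∈ T, (1 - K.a' i) = (T.card:ℝ) - σT := by
    rw [Finset.sum_sub_distrib, Finset.sum_const, nsmul_eq_mul, mul_one, hσT]
  have hsumYm : ∑ i ∈ Finset.Icc 1 K.m, Y i = (K.m:ℝ) - K.A' := by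
    have h1 : ∀ i ∈ Finset.Icc 1 K.m, Y i = 1 - K.a' i := by
      intro i hi; rw [hY]; simp [(Finset.mem_Icc.mp hi).2]
    rw [Finset.sum_congr rfl h1, K.sum_one_sub_a']
  have hsumYT : ∑ i ∈ T, Y i = (T.card:ℝ) - σT := by
    have h1 : ∀ i ∈ T, Y i = 1 - K.a' i := by
      intro i hi; rw [hY]; simp [(Finset.mem_Icc.mp (hTsub hi)).2]
    rw [Finset.sum_congr rfl h1, hsumT_a']
  have hsumYd : ∑ i ∈ Finset.Icc (K.m+2) K.nn, Y i = (K.m:ℝ) - K.A' + 2 := by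
    rw [Finset.sum_congr rfl hYdummy, Finset.sum_const, K.card_Icc_m2, nsmul_eq_mul, mul_one]
    have := K.A'_lt
    push_cast [Nat.cast_sub (by omega : K.A' ≤ K.m)]
    ring
  have hsumY : ∑ i ∈ (Finset.Icc 1 K.nn).filter (fun i => x i = 0), Y i
      = (K.pp : ℝ) - ∑ i ∈ Finset.Icc 1 K.nn, x i := by
    rw [K.sum_filter_eq x hbin hx0 Y, hfil, hsumYm, hsumYT, hYm1, hsumYd, hsumx, K.pp_cast]
    ring
  have hgle := K.g_le x Y (fun _ => 0) hcon hsumY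
  have hval : ∑ i ∈ (Finset.Icc 1 K.nn).filter (fun i => x i = 0),
      (K.cl i * Y i + (fun _ : ℕ => (0:ℝ)) i)
      = ((K.V:ℝ) - vT) + K.M * (1 - σT) := by
    rw [K.sum_filter_eq x hbin hx0 _, hfil]
    have h1 : ∑ i ∈ Finset.Icc 1 K.m, (K.cl i * Y i + (fun _ : ℕ => (0:ℝ)) i) = (K.V:ℝ) := by
      have he : ∀ i ∈ Finset.Icc 1 K.m, K.cl i * Y i + (fun _ : ℕ => (0:ℝ)) i = K.v i := by
        intro i hi
        have hYi : Y i = 1 - K.a' i := by rw [hY]; simp [(Finset.mem_Icc.mp hi).2]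
        rw [hYi]
        simp only [add_zero]
        exact K.cl_mul_w i hi
      rw [Finset.sum_congr rfl he, K.sum_v_real]
    have h2 : ∑ i ∈ T, (K.cl i * Y i + (fun _ : ℕ => (0:ℝ)) i) = vT := by
      have he : ∀ i ∈ T, K.cl i * Y i + (fun _ : ℕ => (0:ℝ)) i = K.v i := by
        intro i hi
        have hYi : Y i = 1 - K.a' i := by
          rw [hY]; simp [(Finset.mem_Icc.mp (hTsub hi)).2]
        rw [hYi]
        simp only [add_zero]
        exact K.cl_mul_w i (hTsub hi)
      rw [Finset.sum_congr rfl he, hvT]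
    have h3 : K.cl (K.m+1) * Y (K.m+1) + (fun _ : ℕ => (0:ℝ)) (K.m+1) = K.M * (1 - σT) := by
      rw [hYm1, K.cl_m1]; simp
    have h4 : ∑ i ∈ Finset.Icc (K.m+2) K.nn, (K.cl i * Y i + (fun _ : ℕ => (0:ℝ)) i) = 0 := by
      apply Finset.sum_eq_zero
      intro i hi
      rw [K.cl_dummy i (Finset.mem_Icc.mp hi).1]; simp
    rw [h1, h2, h3, h4]
    ring
  rw [hval] at hgle
  refine ⟨x, hbin, hsumle, ?_⟩
  unfold h
  rw [hCx]
  have hgam : K.Gam = (K.m:ℝ) - K.A' + 1 := rfl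
  have : vT = (K.OPT:ℝ) := hvTOPT
  linarith [hgle]
end KnapInstance
/-- With `π` fixed to `π = M`, the optimal value of the constructed two-stage selection
instance equals `(Γ + 1)M + V - OPT`. -/
theorem stmt12 (K : KnapInstance) :
    sInf {w | ∃ x : ℕ → ℝ,
        (∀ i ∈ Finset.Icc 1 K.nn, x i = 0 ∨ x i = 1) ∧
        (∑ i ∈ Finset.Icc 1 K.nn, x i ≤ (K.pp : ℝ)) ∧
        w = K.h x K.M}
      = (K.Gam + 1) * K.M + (K.V : ℝ) - (K.OPT : ℝ) := by
  obtain ⟨x₀, hbin₀, hsum₀, hle₀⟩ := K.h_ub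
  apply le_antisymm
  · exact le_trans
      (csInf_le
        ⟨(K.Gam + 1) * K.M + (K.V:ℝ) - (K.OPT:ℝ),
          by rintro w ⟨x, hb, hs, rfl⟩; exact K.h_lb x hb hs⟩
        ⟨x₀, hbin₀, hsum₀, rfl⟩)
      hle₀
  · refine le_csInf ⟨K.h x₀ K.M, ⟨x₀, hbin₀, hsum₀, rfl⟩⟩ ?_
    rintro w ⟨x, hb, hs, rfl⟩
    exact K.h_lb x hb hs
end
end

section
/- Every perfect matching of the bipartite graph G contains exactly p edges from the set {{v_i, w_i} : i ∈ [n]}. -/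
open Classical
noncomputable section

/-- The condition for `{v_i, w_j}` to be an edge of the graph `G` (with `0`-based indices,
so index `i` corresponds to vertex `v_{i+1}`/`w_{i+1}`): either `i = j ∈ [n]`, or
`i ∈ [n]` and `j ∈ {n+1, …, 2n-p}`, or `i ∈ {n+1, …, 2n-p}` and `j ∈ [n]`. -/
def EdgeCond (n : ℕ) (i j : ℕ) : Prop :=
  (i < n ∧ j < n ∧ i = j) ∨ (i < n ∧ n ≤ j) ∨ (n ≤ i ∧ j < n)

/-- The bipartite graph `G` on vertex set `V ⊔ W` with `|V| = |W| = 2n - p`, where `Sum.inl i`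
represents `v_{i+1}` and `Sum.inr j` represents `w_{j+1}`. -/
def G (n p : ℕ) : SimpleGraph (Fin (2 * n - p) ⊕ Fin (2 * n - p)) :=
  SimpleGraph.fromRel (fun u w =>
    match u, w with
    | Sum.inl i, Sum.inr j => EdgeCond n (i : ℕ) (j : ℕ)
    | _, _ => False)

/-!
A perfect matching of `G` is the graph of a permutation `σ` of the indices, `v_i ↦ w_{σ i}`.
Let `s = [n]`. Indices outside `s` are sent into `s`, and an index of `s` sent into `s` is fixed,
so `σ⁻¹(s)`, which has `n` elements, is the disjoint union of the fixed points of `σ` and of the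
`n - p` indices outside `s`.
-/

open Finset Sum

theorem exists_equiv_of_forall_existsUnique {α β : Type*} {R : α → β → Prop}
    (hl : ∀ a, ∃! b, R a b) (hr : ∀ b, ∃! a, R a b) :
    ∃ e : α ≃ β, ∀ a b, R a b ↔ e a = b := by
  choose f hf using fun a => (hl a).exists
  choose g hg using fun b => (hr b).exists
  refine ⟨⟨f, g, fun a => (hr (f a)).unique (hg _) (hf a),
    fun b => (hl (g b)).unique (hf _) (hg b)⟩, fun a b => ⟨(hl a).unique (hf a), ?_⟩⟩
  rintro rfl
  exact hf a

theorem SimpleGraph.Subgraph.IsPerfectMatching.exists_equiv_sum {α β : Type*}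
    {G : SimpleGraph (α ⊕ β)} {M : G.Subgraph} (hM : M.IsPerfectMatching)
    (hl : ∀ a a', ¬ G.Adj (inl a) (inl a')) (hr : ∀ b b', ¬ G.Adj (inr b) (inr b')) :
    ∃ e : α ≃ β, ∀ a b, M.Adj (inl a) (inr b) ↔ e a = b := by
  rw [isPerfectMatching_iff] at hM
  refine exists_equiv_of_forall_existsUnique (fun a => ?_) (fun b => ?_)
  · obtain ⟨a' | b, hadj, huniq⟩ := hM (inl a)
    · exact absurd (M.adj_sub hadj) (hl _ _)
    · exact ⟨b, hadj, fun b' hb' => inr_injective (huniq _ hb')⟩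
  · obtain ⟨a | b', hadj, huniq⟩ := hM (inr b)
    · exact ⟨a, hadj.symm, fun a' ha' => inl_injective (huniq _ ha'.symm)⟩
    · exact absurd (M.adj_sub hadj) (hr _ _)

theorem Equiv.Perm.card_fixedPoints_add_card_compl {α : Type*} [Fintype α] [DecidableEq α]
    (σ : Equiv.Perm α) (s : Finset α) (h_out : ∀ i ∉ s, σ i ∈ s)
    (h_in : ∀ i ∈ s, σ i ∈ s → σ i = i) :
    #{i | σ i = i} + #sᶜ = #s := by
  have h_fixed_mem {i : α} (hi : σ i = i) : i ∈ s := by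
    by_contra hs
    exact hs (hi ▸ h_out i hs)
  have h_preimage : ({i | σ i ∈ s} : Finset α) = ({i | σ i = i} : Finset α) ∪ sᶜ := by
    ext i
    simp only [mem_filter, mem_univ, true_and, mem_union, mem_compl]
    by_cases hi : i ∈ s
    · simp only [hi, not_true_eq_false, or_false]
      exact ⟨h_in i hi, fun h => by rwa [h]⟩
    · simp [hi, h_out i hi]
  have h_disj : _root_.Disjoint ({i | σ i = i} : Finset α) sᶜ := by
    simpa [disjoint_left] using fun i hi => h_fixed_mem hi
  rw [← card_union_of_disjoint h_disj, ← h_preimage]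
  exact card_equiv σ (by simp)

theorem G_adj_inl_inr {n p : ℕ} {i j : Fin (2 * n - p)} :
    (G n p).Adj (inl i) (inr j) ↔ EdgeCond n i j := by
  simp [G]

theorem G_not_adj_inl_inl {n p : ℕ} (i j : Fin (2 * n - p)) :
    ¬ (G n p).Adj (inl i) (inl j) := by
  simp [G]

theorem G_not_adj_inr_inr {n p : ℕ} (i j : Fin (2 * n - p)) :
    ¬ (G n p).Adj (inr i) (inr j) := by
  simp [G]

theorem stmt13_general (n p : ℕ) (hpn : p ≤ n)
    (M : (G n p).Subgraph) (hM : M.IsPerfectMatching) :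
    (Finset.univ.filter
      (fun i : Fin (2 * n - p) => M.Adj (Sum.inl i) (Sum.inr i))).card = p := by
  obtain ⟨σ, hσ⟩ := hM.exists_equiv_sum G_not_adj_inl_inl G_not_adj_inr_inr
  have h_edge (i : Fin (2 * n - p)) : EdgeCond n i (σ i) :=
    G_adj_inl_inr.1 (M.adj_sub ((hσ _ _).2 rfl))
  have h_count := Equiv.Perm.card_fixedPoints_add_card_compl σ {i | (i : ℕ) < n}
    (fun i _ => by grind [EdgeCond]) (fun i _ _ => by grind [EdgeCond])
  simp only [hσ, card_compl, Fin.card_filter_val_lt, Fintype.card_fin] at h_count ⊢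
  omega

/-- Every perfect matching of `G` contains exactly `p` edges from `{{v_i, w_i} : i ∈ [n]}`. -/
theorem stmt13 (n p : ℕ) (hn : 1 ≤ n) (hp1 : 1 ≤ p) (hpn : p ≤ n)
    (M : (G n p).Subgraph) (hM : M.IsPerfectMatching) :
    (Finset.univ.filter
      (fun i : Fin (2 * n - p) => M.Adj (Sum.inl i) (Sum.inr i))).card = p :=
  stmt13_general n p hpn M hM
end
end

section
/- For every j ∈ [m] and every π ∈ [0,1], there is an optimal solution (x, z̲, z̄) of the problem (◦) in which at most one of the 2|T_j| variables {z̲_i, z̄_i : i ∈ T_j} lies strictly between 0 and 1. -/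
open Classical
noncomputable section

/-- The bucket `T_j` of the partition given by `t`. -/
def bucket {n m : ℕ} (t : Fin n → Fin m) (j : Fin m) : Finset (Fin n) :=
  Finset.univ.filter (fun i => t i = j)

/-- Feasibility for the problem (◦) on bucket `T_j` with parameter `π`. -/
def FeasCirc {n m : ℕ} (t : Fin n → Fin m) (p : Fin m → ℕ) (j : Fin m) (π : ℝ)
    (x zl zu : Fin n → ℝ) : Prop :=
  (∀ i, t i = j → ((x i = 0 ∨ x i = 1) ∧
    0 ≤ zl i ∧ zl i ≤ 1 ∧ 0 ≤ zu i ∧ zu i ≤ 1 ∧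
    x i + zl i ≤ 1 ∧ x i + zu i ≤ 1)) ∧
  ∑ i ∈ bucket t j, (x i + π * zl i + (1 - π) * zu i) = (p j : ℝ)

/-- The objective function of the problem (◦) on bucket `T_j` with parameter `π`. -/
def ObjCirc {n m : ℕ} (t : Fin n → Fin m) (C cl d : Fin n → ℝ) (j : Fin m) (π : ℝ)
    (x zl zu : Fin n → ℝ) : ℝ :=
  ∑ i ∈ bucket t j, (C i * x i + cl i * π * zl i + (cl i + d i) * (1 - π) * zu i)

/-- `f_j(π)`: the optimal value of the problem (◦) on bucket `T_j`. -/
def fj {n m : ℕ} (t : Fin n → Fin m) (p : Fin m → ℕ) (C cl d : Fin n → ℝ)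
    (j : Fin m) (π : ℝ) : ℝ :=
  sInf {v | ∃ x zl zu : Fin n → ℝ,
    FeasCirc t p j π x zl zu ∧ v = ObjCirc t C cl d j π x zl zu}

/-- The set `Π_j` of candidate breakpoints of `f_j`. -/
def Pij {n m : ℕ} (t : Fin n → Fin m) (p : Fin m → ℕ) (j : Fin m) : Set ℝ :=
  Set.Icc 0 1 ∩ {q | ∃ A B c : ℕ, A ≤ p j ∧ B ≤ p j ∧ c ≤ (bucket t j).card ∧
    A + B ≤ p j ∧ B < c ∧ q = ((p j : ℝ) - A - B) / ((c : ℝ) - B)}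

/-! ### Auxiliary material for `stmt15` -/

lemma aux_sum_update {α : Type*} [DecidableEq α] {T : Finset α} {i : α} (hi : i ∈ T)
    (g f : α → ℝ) (b : ℝ) :
    ∑ a ∈ T, g a * (Function.update f i b a)
      = (∑ a ∈ T, g a * f a) + g i * b - g i * f i := by
  rw [← Finset.sum_erase_add _ _ hi,
      ← Finset.sum_erase_add T (fun a => g a * f a) hi]
  have h : ∑ a ∈ T.erase i, g a * Function.update f i b a = ∑ a ∈ T.erase i, g a * f a :=
    Finset.sum_congr rfl fun a ha => by rw [Function.update_of_ne (Finset.ne_of_mem_erase ha)]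
  rw [h, Function.update_self]; ring

/-- Two-point modification of a function. -/
def updF {γ : Type*} [DecidableEq γ] (Z : γ → ℝ) (s1 s2 : γ) (δ1 δ2 : ℝ) : γ → ℝ :=
  Function.update (Function.update Z s1 (Z s1 + δ1)) s2 (Z s2 + δ2)

lemma updF_fst {γ : Type*} [DecidableEq γ] (Z : γ → ℝ) {s1 s2 : γ} (hne : s1 ≠ s2)
    (δ1 δ2 : ℝ) : updF Z s1 s2 δ1 δ2 s1 = Z s1 + δ1 := by
  rw [updF, Function.update_of_ne hne, Function.update_self]

lemma updF_snd {γ : Type*} [DecidableEq γ] (Z : γ → ℝ) (s1 s2 : γ)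
    (δ1 δ2 : ℝ) : updF Z s1 s2 δ1 δ2 s2 = Z s2 + δ2 := by
  rw [updF, Function.update_self]

lemma updF_other {γ : Type*} [DecidableEq γ] (Z : γ → ℝ) {s1 s2 s : γ}
    (h1 : s ≠ s1) (h2 : s ≠ s2) (δ1 δ2 : ℝ) : updF Z s1 s2 δ1 δ2 s = Z s := by
  rw [updF, Function.update_of_ne h2, Function.update_of_ne h1]

lemma sum_updF {γ : Type*} [DecidableEq γ] {T : Finset γ} {s1 s2 : γ} (hne : s1 ≠ s2)
    (h1 : s1 ∈ T) (h2 : s2 ∈ T) (g Z : γ → ℝ) (δ1 δ2 : ℝ) :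
    ∑ a ∈ T, g a * (updF Z s1 s2 δ1 δ2 a)
      = (∑ a ∈ T, g a * Z a) + g s1 * δ1 + g s2 * δ2 := by
  rw [updF, aux_sum_update h2, aux_sum_update h1, Function.update_of_ne hne.symm]
  ring

lemma elim_comp {α β : Type*} (F : α ⊕ β → ℝ) :
    Sum.elim (fun i => F (Sum.inl i)) (fun i => F (Sum.inr i)) = F := by
  funext s; cases s <;> rfl

section Aux
variable {n m : ℕ} (t : Fin n → Fin m) (p : Fin m → ℕ) (j : Fin m) (π : ℝ) (C cl d : Fin n → ℝ)

/-- Search space: feasible points vanishing outside the bucket. -/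
def SolSet : Set ((Fin n → ℝ) × (Fin n → ℝ) × (Fin n → ℝ)) :=
  {w | FeasCirc t p j π w.1 w.2.1 w.2.2 ∧
    ∀ i, t i ≠ j → w.1 i = 0 ∧ w.2.1 i = 0 ∧ w.2.2 i = 0}

def objF : ((Fin n → ℝ) × (Fin n → ℝ) × (Fin n → ℝ)) → ℝ :=
  fun w => ObjCirc t C cl d j π w.1 w.2.1 w.2.2

def cntF : ((Fin n → ℝ) × (Fin n → ℝ) × (Fin n → ℝ)) → ℕ := fun w =>
  ((bucket t j).filter (fun i => 0 < w.2.1 i ∧ w.2.1 i < 1)).card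
    + ((bucket t j).filter (fun i => 0 < w.2.2 i ∧ w.2.2 i < 1)).card

def AwF : Fin n ⊕ Fin n → ℝ := Sum.elim (fun _ => π) (fun _ => 1 - π)

def GF : Fin n ⊕ Fin n → ℝ := Sum.elim (fun i => cl i * π) (fun i => (cl i + d i) * (1 - π))

def idxF : Fin n ⊕ Fin n → Fin n := Sum.elim id id

def B2F : Finset (Fin n ⊕ Fin n) := (bucket t j).disjSum (bucket t j)

lemma GF_eq (s : Fin n ⊕ Fin n) :
    GF π cl d s = (Sum.elim cl (fun i => cl i + d i) s) * AwF π (n := n) s := by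
  cases s <;> simp [GF, AwF]

lemma mem_B2F_iff (s : Fin n ⊕ Fin n) : s ∈ B2F t j ↔ t (idxF s) = j := by
  cases s <;> simp [B2F, idxF, bucket]

lemma convSum (x zl zu : Fin n → ℝ) :
    ∑ i ∈ bucket t j, (x i + π * zl i + (1 - π) * zu i)
      = (∑ i ∈ bucket t j, x i) + ∑ s ∈ B2F t j, AwF π (n := n) s * (Sum.elim zl zu) s := by
  rw [B2F, Finset.sum_disjSum]
  simp only [Sum.elim_inl, Sum.elim_inr, AwF]
  rw [Finset.sum_add_distrib, Finset.sum_add_distrib]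
  ring

lemma convObj (x zl zu : Fin n → ℝ) :
    ObjCirc t C cl d j π x zl zu
      = (∑ i ∈ bucket t j, C i * x i)
          + ∑ s ∈ B2F t j, GF π cl d (n := n) s * (Sum.elim zl zu) s := by
  rw [B2F, Finset.sum_disjSum, ObjCirc]
  simp only [Sum.elim_inl, Sum.elim_inr, GF, Finset.sum_add_distrib, mul_assoc]
  ring

lemma convCnt (w : (Fin n → ℝ) × (Fin n → ℝ) × (Fin n → ℝ)) :
    cntF t j w
      = ((B2F t j).filter
          (fun s => 0 < (Sum.elim w.2.1 w.2.2) s ∧ (Sum.elim w.2.1 w.2.2) s < 1)).card := by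
  have h : (B2F t j).filter
        (fun s => 0 < (Sum.elim w.2.1 w.2.2) s ∧ (Sum.elim w.2.1 w.2.2) s < 1)
      = ((bucket t j).filter (fun i => 0 < w.2.1 i ∧ w.2.1 i < 1)).disjSum
        ((bucket t j).filter (fun i => 0 < w.2.2 i ∧ w.2.2 i < 1)) := by
    ext s
    cases s <;> simp [B2F, Finset.mem_filter]
  rw [h, Finset.card_disjSum, cntF]

lemma contx (i : Fin n) : Continuous fun w : (Fin n → ℝ) × (Fin n → ℝ) × (Fin n → ℝ) => w.1 i :=
  (continuous_apply i).comp continuous_fst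
lemma contzl (i : Fin n) : Continuous fun w : (Fin n → ℝ) × (Fin n → ℝ) × (Fin n → ℝ) => w.2.1 i :=
  (continuous_apply i).comp (continuous_fst.comp continuous_snd)
lemma contzu (i : Fin n) : Continuous fun w : (Fin n → ℝ) × (Fin n → ℝ) × (Fin n → ℝ) => w.2.2 i :=
  (continuous_apply i).comp (continuous_snd.comp continuous_snd)

lemma objF_continuous : Continuous (objF t j π C cl d) := by
  unfold objF ObjCirc
  apply continuous_finset_sum
  intro i _
  exact ((continuous_const.mul (contx i)).add
      (continuous_const.mul (contzl i))).add (continuous_const.mul (contzu i))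

lemma sumF_continuous : Continuous (fun w : (Fin n → ℝ) × (Fin n → ℝ) × (Fin n → ℝ) =>
    ∑ i ∈ bucket t j, (w.1 i + π * w.2.1 i + (1 - π) * w.2.2 i)) := by
  apply continuous_finset_sum
  intro i _
  exact ((contx i).add (continuous_const.mul (contzl i))).add (continuous_const.mul (contzu i))

lemma SolSet_closed : IsClosed (SolSet t p j π) := by
  have hrw : SolSet t p j π =
      (⋂ i : Fin n, {w : (Fin n → ℝ) × (Fin n → ℝ) × (Fin n → ℝ) | t i = j →
        ((w.1 i = 0 ∨ w.1 i = 1) ∧ 0 ≤ w.2.1 i ∧ w.2.1 i ≤ 1 ∧ 0 ≤ w.2.2 i ∧ w.2.2 i ≤ 1 ∧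
          w.1 i + w.2.1 i ≤ 1 ∧ w.1 i + w.2.2 i ≤ 1)})
      ∩ {w | ∑ i ∈ bucket t j, (w.1 i + π * w.2.1 i + (1 - π) * w.2.2 i) = (p j : ℝ)}
      ∩ ⋂ i : Fin n, {w : (Fin n → ℝ) × (Fin n → ℝ) × (Fin n → ℝ) | t i ≠ j →
          (w.1 i = 0 ∧ w.2.1 i = 0 ∧ w.2.2 i = 0)} := by
    ext w
    simp only [SolSet, FeasCirc, Set.mem_setOf_eq, Set.mem_inter_iff, Set.mem_iInter]
  rw [hrw]
  refine IsClosed.inter (IsClosed.inter (isClosed_iInter fun i => ?_) ?_)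
    (isClosed_iInter fun i => ?_)
  · by_cases hi : t i = j
    · simp only [hi, forall_const]
      refine IsClosed.inter ?_ (IsClosed.inter ?_ (IsClosed.inter ?_ (IsClosed.inter ?_
        (IsClosed.inter ?_ (IsClosed.inter ?_ ?_)))))
      · exact (isClosed_eq (contx i) continuous_const).union
          (isClosed_eq (contx i) continuous_const)
      · exact isClosed_le continuous_const (contzl i)
      · exact isClosed_le (contzl i) continuous_const
      · exact isClosed_le continuous_const (contzu i)
      · exact isClosed_le (contzu i) continuous_const
      · exact isClosed_le ((contx i).add (contzl i)) continuous_const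
      · exact isClosed_le ((contx i).add (contzu i)) continuous_const
    · simp only [hi, false_implies]
      exact isClosed_univ
  · exact isClosed_eq (sumF_continuous t j π) continuous_const
  · by_cases hi : t i = j
    · simp only [hi, ne_eq, not_true_eq_false, false_implies, Set.setOf_true]
      exact isClosed_univ
    · simp only [hi, ne_eq, not_false_eq_true, forall_const]
      exact IsClosed.inter (isClosed_eq (contx i) continuous_const)
        (IsClosed.inter (isClosed_eq (contzl i) continuous_const)
          (isClosed_eq (contzu i) continuous_const))

lemma SolSet_compact : IsCompact (SolSet t p j π) := by
  apply IsCompact.of_isClosed_subset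
    (isCompact_Icc (a := ((0 : Fin n → ℝ), (0 : Fin n → ℝ), (0 : Fin n → ℝ)))
      (b := ((1 : Fin n → ℝ), (1 : Fin n → ℝ), (1 : Fin n → ℝ)))) (SolSet_closed t p j π)
  rintro w ⟨hfeas, hzero⟩
  simp only [Set.mem_Icc, Prod.le_def, Pi.le_def]
  refine ⟨⟨?_, ?_, ?_⟩, ?_, ?_, ?_⟩ <;> intro i <;>
  · by_cases hi : t i = j
    · rcases hfeas.1 i hi with ⟨hx, h0l, h1l, h0u, h1u, hxl, hxu⟩
      rcases hx with h | h <;> simp only [Pi.zero_apply, Pi.one_apply, h] <;> linarith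
    · rcases hzero i hi with ⟨h1, h2, h3⟩
      simp only [Pi.zero_apply, Pi.one_apply, h1, h2, h3] <;> norm_num

lemma SolSet_nonempty (hp : p j ≤ (bucket t j).card) : (SolSet t p j π).Nonempty := by
  obtain ⟨A0, hA0sub, hA0card⟩ := Finset.exists_subset_card_eq hp
  refine ⟨((fun i => if i ∈ A0 then (1:ℝ) else 0), 0, 0), ⟨?_, ?_⟩, ?_⟩
  · intro i hi
    by_cases h : i ∈ A0 <;> simp [h]
  · have h1 : ∑ i ∈ bucket t j, ((if i ∈ A0 then (1:ℝ) else 0) + π * (0:ℝ) + (1 - π) * (0:ℝ))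
        = ∑ i ∈ bucket t j, (if i ∈ A0 then (1:ℝ) else 0) := by
      apply Finset.sum_congr rfl; intro i _; ring_nf
    calc ∑ i ∈ bucket t j, ((if i ∈ A0 then (1:ℝ) else 0) + π * (0:ℝ) + (1 - π) * (0:ℝ))
        = ∑ i ∈ bucket t j, (if i ∈ A0 then (1:ℝ) else 0) := h1
      _ = ((bucket t j).filter (fun i => i ∈ A0)).card := Finset.sum_boole _ _
      _ = (A0.card : ℝ) := by rw [Finset.filter_mem_eq_inter, Finset.inter_eq_right.mpr hA0sub]
      _ = (p j : ℝ) := by rw [hA0card]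
  · intro i hi
    have : i ∉ A0 := fun h => hi (by simpa [bucket] using hA0sub h)
    simp [this]

end Aux

set_option maxHeartbeats 2000000

/-- For every `j` and `π ∈ [0,1]`, the problem (◦) has an optimal solution in which at most
one of the variables `z̲_i, z̄_i` (for `i ∈ T_j`) lies strictly between `0` and `1`. -/
theorem stmt15 (n m : ℕ) (hn : 1 ≤ n) (hm : 1 ≤ m)
    (t : Fin n → Fin m) (p : Fin m → ℕ)
    (hp : ∀ j, 1 ≤ p j ∧ p j ≤ (bucket t j).card)
    (C cl d : Fin n → ℝ)
    (hC : ∀ i, 0 ≤ C i) (hcl : ∀ i, 0 ≤ cl i) (hd : ∀ i, 0 ≤ d i)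
    (j : Fin m) (π : ℝ) (hπ : π ∈ Set.Icc (0 : ℝ) 1) :
    ∃ x zl zu : Fin n → ℝ, FeasCirc t p j π x zl zu ∧
      (∀ x' zl' zu' : Fin n → ℝ, FeasCirc t p j π x' zl' zu' →
        ObjCirc t C cl d j π x zl zu ≤ ObjCirc t C cl d j π x' zl' zu') ∧
      ((bucket t j).filter (fun i => 0 < zl i ∧ zl i < 1)).card
        + ((bucket t j).filter (fun i => 0 < zu i ∧ zu i < 1)).card ≤ 1 := by
  classical
  obtain ⟨hπ0, hπ1⟩ := hπ
  obtain ⟨w₀, hw₀, hmin₀⟩ := (SolSet_compact t p j π).exists_isMinOn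
    (SolSet_nonempty t p j π (hp j).2) (objF_continuous t j π C cl d).continuousOn
  set cs : Set ℕ := {c | ∃ w ∈ SolSet t p j π,
      IsMinOn (objF t j π C cl d) (SolSet t p j π) w ∧ cntF t j w = c} with hcsdef
  have hcsne : cs.Nonempty := ⟨cntF t j w₀, w₀, hw₀, hmin₀, rfl⟩
  obtain ⟨w, hwS, hwmin, hwcnt⟩ := Nat.sInf_mem hcsne
  have hfeasw := hwS.1
  have hzerow := hwS.2
  -- optimality against all feasible points
  have hglobal : ∀ x' zl' zu', FeasCirc t p j π x' zl' zu' →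
      ObjCirc t C cl d j π w.1 w.2.1 w.2.2 ≤ ObjCirc t C cl d j π x' zl' zu' := by
    intro x' zl' zu' hf
    have hmem : ((fun i => if t i = j then x' i else 0),
        (fun i => if t i = j then zl' i else 0),
        (fun i => if t i = j then zu' i else 0)) ∈ SolSet t p j π := by
      refine ⟨⟨?_, ?_⟩, ?_⟩
      · intro i hi; simpa [hi] using hf.1 i hi
      · have h : ∑ i ∈ bucket t j,
            ((if t i = j then x' i else 0) + π * (if t i = j then zl' i else 0)
              + (1 - π) * (if t i = j then zu' i else 0))
            = ∑ i ∈ bucket t j, (x' i + π * zl' i + (1 - π) * zu' i) := by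
          refine Finset.sum_congr rfl fun i hi => ?_
          have hij : t i = j := by simpa [bucket] using hi
          simp [hij]
        exact h.trans hf.2
      · intro i hi; simp [hi]
    have hobj : objF t j π C cl d ((fun i => if t i = j then x' i else 0),
        (fun i => if t i = j then zl' i else 0),
        (fun i => if t i = j then zu' i else 0)) = ObjCirc t C cl d j π x' zl' zu' := by
      unfold objF ObjCirc
      refine Finset.sum_congr rfl fun i hi => ?_
      have hij : t i = j := by simpa [bucket] using hi
      simp [hij]
    have := isMinOn_iff.mp hwmin _ hmem
    rw [hobj] at this
    exact this
  suffices hkey : cntF t j w ≤ 1 by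
    exact ⟨w.1, w.2.1, w.2.2, hfeasw, hglobal, hkey⟩
  by_contra hk
  push_neg at hk
  -- sum-type bookkeeping
  set Z : Fin n ⊕ Fin n → ℝ := Sum.elim w.2.1 w.2.2 with hZdef
  set FF : Finset (Fin n ⊕ Fin n) := (B2F t j).filter (fun s => 0 < Z s ∧ Z s < 1) with hFFdef
  have hcntFF : cntF t j w = FF.card := by
    rw [convCnt t j w, hFFdef, hZdef]
  rw [hcntFF] at hk
  obtain ⟨s1, hs1, s2, hs2, hne⟩ := Finset.one_lt_card.mp hk
  have slotfacts : ∀ s ∈ FF, t (idxF s) = j ∧ w.1 (idxF s) = 0 ∧ (0 < Z s ∧ Z s < 1) ∧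
      (0 ≤ AwF π (n := n) s ∧ AwF π (n := n) s ≤ 1) := by
    intro s hs
    obtain ⟨hsB2, hfrac⟩ := Finset.mem_filter.mp hs
    have hidx : t (idxF s) = j := (mem_B2F_iff t j s).mp hsB2
    refine ⟨hidx, ?_, hfrac, ?_⟩
    · obtain ⟨hx01, h0l, h1l, h0u, h1u, hxl, hxu⟩ := hfeasw.1 (idxF s) hidx
      rcases hx01 with h | h
      · exact h
      · exfalso
        cases s with
        | inl a =>
          have hv : Z (Sum.inl a) = w.2.1 a := rfl
          have hxa : w.1 a = 1 := h
          have hx2 : w.1 a + w.2.1 a ≤ 1 := hxl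
          have := hfrac.1
          rw [hv] at this
          linarith
        | inr a =>
          have hv : Z (Sum.inr a) = w.2.2 a := rfl
          have hxa : w.1 a = 1 := h
          have hx2 : w.1 a + w.2.2 a ≤ 1 := hxu
          have := hfrac.1
          rw [hv] at this
          linarith
    · cases s with
      | inl a => exact ⟨hπ0, hπ1⟩
      | inr a => exact ⟨by simp [AwF]; linarith, by simp [AwF]; linarith⟩
  obtain ⟨hidx1, hx01, hfrac1, hAw1⟩ := slotfacts s1 hs1
  obtain ⟨hidx2, hx02, hfrac2, hAw2⟩ := slotfacts s2 hs2
  have hs1B2 : s1 ∈ B2F t j := (Finset.mem_filter.mp hs1).1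
  have hs2B2 : s2 ∈ B2F t j := (Finset.mem_filter.mp hs2).1
  -- main perturbation lemma
  have main : ∀ δ1 δ2 : ℝ, 0 ≤ Z s1 + δ1 → Z s1 + δ1 ≤ 1 → 0 ≤ Z s2 + δ2 → Z s2 + δ2 ≤ 1 →
      AwF π (n := n) s1 * δ1 + AwF π (n := n) s2 * δ2 = 0 →
      ((w.1, fun i => updF Z s1 s2 δ1 δ2 (Sum.inl i), fun i => updF Z s1 s2 δ1 δ2 (Sum.inr i))
          ∈ SolSet t p j π) ∧
      objF t j π C cl d (w.1, fun i => updF Z s1 s2 δ1 δ2 (Sum.inl i),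
          fun i => updF Z s1 s2 δ1 δ2 (Sum.inr i))
        = objF t j π C cl d w
            + (GF π cl d (n := n) s1 * δ1 + GF π cl d (n := n) s2 * δ2) ∧
      (B2F t j).filter (fun s => 0 < updF Z s1 s2 δ1 δ2 s ∧ updF Z s1 s2 δ1 δ2 s < 1) ⊆ FF ∧
      cntF t j (w.1, fun i => updF Z s1 s2 δ1 δ2 (Sum.inl i),
          fun i => updF Z s1 s2 δ1 δ2 (Sum.inr i))
        = ((B2F t j).filter
            (fun s => 0 < updF Z s1 s2 δ1 δ2 s ∧ updF Z s1 s2 δ1 δ2 s < 1)).card := by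
    intro δ1 δ2 hb1 hb2 hb3 hb4 hlin
    have hZold : ∀ s, t (idxF s) = j →
        0 ≤ Z s ∧ Z s ≤ 1 ∧ w.1 (idxF s) + Z s ≤ 1 := by
      intro s hs
      cases s with
      | inl a =>
        obtain ⟨_, h0l, h1l, _, _, hxl, _⟩ := hfeasw.1 a hs
        exact ⟨h0l, h1l, hxl⟩
      | inr a =>
        obtain ⟨_, _, _, h0u, h1u, _, hxu⟩ := hfeasw.1 a hs
        exact ⟨h0u, h1u, hxu⟩
    have hZb : ∀ s, t (idxF s) = j →
        0 ≤ updF Z s1 s2 δ1 δ2 s ∧ updF Z s1 s2 δ1 δ2 s ≤ 1 ∧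
          w.1 (idxF s) + updF Z s1 s2 δ1 δ2 s ≤ 1 := by
      intro s hs
      by_cases e1 : s = s1
      · subst e1
        rw [updF_fst Z hne]
        exact ⟨hb1, hb2, by rw [hx01]; linarith⟩
      · by_cases e2 : s = s2
        · subst e2
          rw [updF_snd]
          exact ⟨hb3, hb4, by rw [hx02]; linarith⟩
        · rw [updF_other Z e1 e2]
          exact hZold s hs
    refine ⟨⟨⟨?_, ?_⟩, ?_⟩, ?_, ?_, ?_⟩
    · -- per-index feasibility
      intro i hi
      obtain ⟨hx01i, _, _, _, _, _, _⟩ := hfeasw.1 i hi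
      have h1 := hZb (Sum.inl i) hi
      have h2 := hZb (Sum.inr i) hi
      exact ⟨hx01i, h1.1, h1.2.1, h2.1, h2.2.1, h1.2.2, h2.2.2⟩
    · -- sum constraint
      show ∑ i ∈ bucket t j,
          (w.1 i + π * updF Z s1 s2 δ1 δ2 (Sum.inl i)
            + (1 - π) * updF Z s1 s2 δ1 δ2 (Sum.inr i)) = (p j : ℝ)
      have e := convSum t j π w.1 (fun i => updF Z s1 s2 δ1 δ2 (Sum.inl i))
        (fun i => updF Z s1 s2 δ1 δ2 (Sum.inr i))
      rw [elim_comp (updF Z s1 s2 δ1 δ2)] at e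
      rw [e, sum_updF hne hs1B2 hs2B2]
      have e0 := convSum t j π w.1 w.2.1 w.2.2
      rw [← hZdef] at e0
      have hc := hfeasw.2
      rw [e0] at hc
      linarith [hlin, hc]
    · -- zero outside
      intro i hi
      refine ⟨(hzerow i hi).1, ?_, ?_⟩
      · have e1 : Sum.inl i ≠ s1 := fun h => hi (by rw [show t i = t (idxF s1) from by rw [← h]; rfl]; exact hidx1)
        have e2 : Sum.inl i ≠ s2 := fun h => hi (by rw [show t i = t (idxF s2) from by rw [← h]; rfl]; exact hidx2)
        show updF Z s1 s2 δ1 δ2 (Sum.inl i) = 0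
        rw [updF_other Z e1 e2]
        exact (hzerow i hi).2.1
      · have e1 : Sum.inr i ≠ s1 := fun h => hi (by rw [show t i = t (idxF s1) from by rw [← h]; rfl]; exact hidx1)
        have e2 : Sum.inr i ≠ s2 := fun h => hi (by rw [show t i = t (idxF s2) from by rw [← h]; rfl]; exact hidx2)
        show updF Z s1 s2 δ1 δ2 (Sum.inr i) = 0
        rw [updF_other Z e1 e2]
        exact (hzerow i hi).2.2
    · -- objective change
      show ObjCirc t C cl d j π w.1 (fun i => updF Z s1 s2 δ1 δ2 (Sum.inl i))
          (fun i => updF Z s1 s2 δ1 δ2 (Sum.inr i)) = _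
      rw [convObj t j π C cl d w.1 (fun i => updF Z s1 s2 δ1 δ2 (Sum.inl i))
        (fun i => updF Z s1 s2 δ1 δ2 (Sum.inr i)), elim_comp (updF Z s1 s2 δ1 δ2),
        sum_updF hne hs1B2 hs2B2]
      have e0 := convObj t j π C cl d w.1 w.2.1 w.2.2
      rw [← hZdef] at e0
      show _ = ObjCirc t C cl d j π w.1 w.2.1 w.2.2 + _
      rw [e0]
      ring
    · -- fractional set shrinks
      intro s hsm
      obtain ⟨hsB2', hfrac⟩ := Finset.mem_filter.mp hsm
      by_cases e1 : s = s1
      · exact e1 ▸ hs1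
      · by_cases e2 : s = s2
        · exact e2 ▸ hs2
        · rw [updF_other Z e1 e2] at hfrac
          rw [hFFdef]
          exact Finset.mem_filter.mpr ⟨hsB2', hfrac⟩
    · -- count formula
      rw [convCnt t j]
      congr 1
      rw [show Sum.elim
          (w.1, fun i => updF Z s1 s2 δ1 δ2 (Sum.inl i),
            fun i => updF Z s1 s2 δ1 δ2 (Sum.inr i)).2.1
          (w.1, fun i => updF Z s1 s2 δ1 δ2 (Sum.inl i),
            fun i => updF Z s1 s2 δ1 δ2 (Sum.inr i)).2.2
        = updF Z s1 s2 δ1 δ2 from elim_comp (updF Z s1 s2 δ1 δ2)]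
  -- final contradiction helper
  have final : ∀ δ1 δ2 : ℝ, 0 ≤ Z s1 + δ1 → Z s1 + δ1 ≤ 1 → 0 ≤ Z s2 + δ2 → Z s2 + δ2 ≤ 1 →
      AwF π (n := n) s1 * δ1 + AwF π (n := n) s2 * δ2 = 0 →
      GF π cl d (n := n) s1 * δ1 + GF π cl d (n := n) s2 * δ2 = 0 →
      (∃ s0 ∈ FF, ¬(0 < updF Z s1 s2 δ1 δ2 s0 ∧ updF Z s1 s2 δ1 δ2 s0 < 1)) → False := by
    rintro δ1 δ2 hb1 hb2 hb3 hb4 hlin hobj0 ⟨s0, hs0FF, hs0int⟩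
    obtain ⟨hmem, hObjEq, hsub, hcnt'⟩ := main δ1 δ2 hb1 hb2 hb3 hb4 hlin
    rw [hobj0, add_zero] at hObjEq
    have hminnew : IsMinOn (objF t j π C cl d) (SolSet t p j π)
        (w.1, fun i => updF Z s1 s2 δ1 δ2 (Sum.inl i),
          fun i => updF Z s1 s2 δ1 δ2 (Sum.inr i)) := by
      rw [isMinOn_iff] at hwmin ⊢
      intro y hy
      rw [hObjEq]
      exact hwmin y hy
    have hle : sInf cs ≤ cntF t j (w.1, fun i => updF Z s1 s2 δ1 δ2 (Sum.inl i),
        fun i => updF Z s1 s2 δ1 δ2 (Sum.inr i)) :=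
      Nat.sInf_le ⟨_, hmem, hminnew, rfl⟩
    have hsub' : (B2F t j).filter
        (fun s => 0 < updF Z s1 s2 δ1 δ2 s ∧ updF Z s1 s2 δ1 δ2 s < 1) ⊆ FF.erase s0 := by
      intro s hsm
      refine Finset.mem_erase.mpr ⟨?_, hsub hsm⟩
      intro h
      subst h
      exact hs0int (Finset.mem_filter.mp hsm).2
    have hcard' : cntF t j (w.1, fun i => updF Z s1 s2 δ1 δ2 (Sum.inl i),
        fun i => updF Z s1 s2 δ1 δ2 (Sum.inr i)) ≤ FF.card - 1 := by
      rw [hcnt']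
      calc _ ≤ (FF.erase s0).card := Finset.card_le_card hsub'
        _ = FF.card - 1 := Finset.card_erase_of_mem hs0FF
    have h1le : 0 < FF.card := Finset.card_pos.mpr ⟨s0, hs0FF⟩
    have hEq : sInf cs = FF.card := by rw [← hwcnt, hcntFF]
    omega
  -- the cross condition
  have hD : GF π cl d (n := n) s1 * AwF π (n := n) s2
      - GF π cl d (n := n) s2 * AwF π (n := n) s1 = 0 := by
    by_contra hD0
    set ε : ℝ := min (min (Z s1) (1 - Z s1)) (min (Z s2) (1 - Z s2)) with hεdef
    have hεpos : 0 < ε :=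
      lt_min (lt_min hfrac1.1 (by linarith [hfrac1.2])) (lt_min hfrac2.1 (by linarith [hfrac2.2]))
    have hε1 : ε ≤ Z s1 := le_trans (min_le_left _ _) (min_le_left _ _)
    have hε2 : ε ≤ 1 - Z s1 := le_trans (min_le_left _ _) (min_le_right _ _)
    have hε3 : ε ≤ Z s2 := le_trans (min_le_right _ _) (min_le_left _ _)
    have hε4 : ε ≤ 1 - Z s2 := le_trans (min_le_right _ _) (min_le_right _ _)
    set D : ℝ := GF π cl d (n := n) s1 * AwF π (n := n) s2
      - GF π cl d (n := n) s2 * AwF π (n := n) s1 with hDdef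
    set τ : ℝ := if 0 < D then -ε else ε with hτdef
    have hτabs : τ = ε ∨ τ = -ε := by
      by_cases h : 0 < D
      · right; rw [hτdef, if_pos h]
      · left; rw [hτdef, if_neg h]
    have hδ1b : -ε ≤ AwF π (n := n) s2 * τ ∧ AwF π (n := n) s2 * τ ≤ ε := by
      rcases hτabs with h | h <;> rw [h] <;> constructor <;>
        nlinarith [hAw2.1, hAw2.2, hεpos.le]
    have hδ2b : -ε ≤ -(AwF π (n := n) s1 * τ) ∧ -(AwF π (n := n) s1 * τ) ≤ ε := by
      rcases hτabs with h | h <;> rw [h] <;> constructor <;>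
        nlinarith [hAw1.1, hAw1.2, hεpos.le]
    obtain ⟨hmem, hObjEq, -, -⟩ := main (AwF π (n := n) s2 * τ) (-(AwF π (n := n) s1 * τ))
      (by linarith [hδ1b.1]) (by linarith [hδ1b.2]) (by linarith [hδ2b.1]) (by linarith [hδ2b.2])
      (by ring)
    have hDτ : GF π cl d (n := n) s1 * (AwF π (n := n) s2 * τ)
        + GF π cl d (n := n) s2 * (-(AwF π (n := n) s1 * τ)) = D * τ := by
      rw [hDdef]; ring
    have hneg : D * τ < 0 := by
      by_cases h : 0 < D
      · have hτ : τ = -ε := by rw [hτdef, if_pos h]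
        rw [hτ]; nlinarith
      · have hD' : D < 0 := lt_of_le_of_ne (not_lt.mp h) hD0
        have hτ : τ = ε := by rw [hτdef, if_neg h]
        rw [hτ]; nlinarith
    have hmle := isMinOn_iff.mp hwmin _ hmem
    rw [hObjEq, hDτ] at hmle
    have : objF t j π C cl d w ≤ objF t j π C cl d w + D * τ := hmle
    linarith
  -- case analysis on vanishing coefficients
  by_cases hA1 : AwF π (n := n) s1 = 0
  · have hG1 : GF π cl d (n := n) s1 = 0 := by rw [GF_eq, hA1, mul_zero]
    refine final (-(Z s1)) 0 (by linarith) (by linarith [hfrac1.2]) (by linarith [hfrac2.1])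
      (by linarith [hfrac2.2]) (by rw [hA1]; ring) (by rw [hG1]; ring) ⟨s1, hs1, ?_⟩
    rw [updF_fst Z hne]
    have h0 : Z s1 + -(Z s1) = 0 := by ring
    rw [h0]
    simp
  · by_cases hA2 : AwF π (n := n) s2 = 0
    · have hG2 : GF π cl d (n := n) s2 = 0 := by rw [GF_eq, hA2, mul_zero]
      refine final 0 (-(Z s2)) (by linarith [hfrac1.1]) (by linarith [hfrac1.2]) (by linarith)
        (by linarith [hfrac2.2]) (by rw [hA2]; ring) (by rw [hG2]; ring) ⟨s2, hs2, ?_⟩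
      rw [updF_snd]
      have h0 : Z s2 + -(Z s2) = 0 := by ring
      rw [h0]
      simp
    · have hA1p : 0 < AwF π (n := n) s1 := lt_of_le_of_ne hAw1.1 (Ne.symm hA1)
      have hA2p : 0 < AwF π (n := n) s2 := lt_of_le_of_ne hAw2.1 (Ne.symm hA2)
      set τ : ℝ := min ((1 - Z s1) / AwF π (n := n) s2) (Z s2 / AwF π (n := n) s1) with hτdef
      have hτpos : 0 < τ :=
        lt_min (div_pos (by linarith [hfrac1.2]) hA2p) (div_pos hfrac2.1 hA1p)
      have hτ1 : AwF π (n := n) s2 * τ ≤ 1 - Z s1 := by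
        calc AwF π (n := n) s2 * τ
            ≤ AwF π (n := n) s2 * ((1 - Z s1) / AwF π (n := n) s2) :=
              mul_le_mul_of_nonneg_left (min_le_left _ _) hA2p.le
          _ = 1 - Z s1 := mul_div_cancel₀ _ (ne_of_gt hA2p)
      have hτ2 : AwF π (n := n) s1 * τ ≤ Z s2 := by
        calc AwF π (n := n) s1 * τ
            ≤ AwF π (n := n) s1 * (Z s2 / AwF π (n := n) s1) :=
              mul_le_mul_of_nonneg_left (min_le_right _ _) hA1p.le
          _ = Z s2 := mul_div_cancel₀ _ (ne_of_gt hA1p)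
      have hd1pos : 0 ≤ AwF π (n := n) s2 * τ := mul_nonneg hA2p.le hτpos.le
      have hd2pos : 0 ≤ AwF π (n := n) s1 * τ := mul_nonneg hA1p.le hτpos.le
      refine final (AwF π (n := n) s2 * τ) (-(AwF π (n := n) s1 * τ))
        (by linarith [hfrac1.1]) (by linarith) (by linarith) (by linarith [hfrac2.2])
        (by ring) (by linear_combination τ * hD) ?_
      rcases min_cases ((1 - Z s1) / AwF π (n := n) s2) (Z s2 / AwF π (n := n) s1) with
        ⟨he, -⟩ | ⟨he, -⟩
      · refine ⟨s1, hs1, ?_⟩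
        rw [updF_fst Z hne]
        have h1 : Z s1 + AwF π (n := n) s2 * τ = 1 := by
          rw [hτdef, he, mul_div_cancel₀ _ (ne_of_gt hA2p)]
          ring
        rw [h1]
        simp
      · refine ⟨s2, hs2, ?_⟩
        rw [updF_snd]
        have h1 : Z s2 + -(AwF π (n := n) s1 * τ) = 0 := by
          rw [hτdef, he, mul_div_cancel₀ _ (ne_of_gt hA1p)]
          ring
        rw [h1]
        simp
end
end
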